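/- arXiv:1705.09228 — 10 statements merged into one kernel-verified Lean document; each statement's English description precedes it below -/
import Mathlib

section
/- Let G be an (additive) abelian group, E a finite set, n a natural number, Λ : E → Finset (Fin n), and for each e ∈ E a function f̌_e : G → ℝ such that for all e and g: f̌_e(g) > 0, f̌_e(0) = 1, and f̌_e(g) = f̌_e(−g). Define q : (Fin n → G) → ℝ by q(g) = ∏_{e ∈ E} f̌_e(∑_{i ∈ Λ(e)} g_i). Suppose e₀ ∈ E and i, j, k ∈ Fin n are pairwise distinct, Λ(e₀) ∩ {i,j,k} = {i}, and for every e ≠ e₀ the set Λ(e) ∩ {i,j,k} is neither {i} nor {j,k}. Then for every h ∈ G, f̌_{e₀}(h)² = q(w(h,−h,0)) · q(w(−h,0,h)) / q(w(0,−h,h)), where w(x,y,z) : Fin n → G is the function assigning x to i, y to j, z to k, and 0 to every other index. -/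
/-- Matsen's Proposition 3.3: recovering a leaf-edge Fourier parameter from the
Fourier-transformed leaf probabilities of a symmetric group-based model. -/
theorem matsen_leaf_edge
    {G : Type*} [AddCommGroup G] {E : Type*} [Fintype E] {n : ℕ}
    (Λ : E → Finset (Fin n)) (f : E → G → ℝ)
    (hpos : ∀ e g, 0 < f e g) (hone : ∀ e, f e 0 = 1)
    (hsymm : ∀ e g, f e g = f e (-g))
    (q : (Fin n → G) → ℝ)
    (hq : ∀ g : Fin n → G, q g = ∏ e, f e (∑ i ∈ Λ e, g i))
    (e₀ : E) (i j k : Fin n)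
    (hij : i ≠ j) (hik : i ≠ k) (hjk : j ≠ k)
    (he₀ : Λ e₀ ∩ {i, j, k} = {i})
    (hother : ∀ e, e ≠ e₀ →
      Λ e ∩ {i, j, k} ≠ {i} ∧ Λ e ∩ {i, j, k} ≠ {j, k})
    (w : G → G → G → Fin n → G)
    (hw : ∀ x y z t, w x y z t =
      if t = i then x else if t = j then y else if t = k then z else 0) :
    ∀ h : G, (f e₀ h) ^ 2 =
      q (w h (-h) 0) * q (w (-h) 0 h) / q (w 0 (-h) h) := by
  classical
  intro h
  -- sum over a leaf set of w x y z
  have hsum : ∀ (x y z : G) (e : E), (∑ t ∈ Λ e, w x y z t) =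
      (if i ∈ Λ e then x else 0) + (if j ∈ Λ e then y else 0) +
      (if k ∈ Λ e then z else 0) := by
    intro x y z e
    have hfun : ∀ t, w x y z t =
        (if t = i then x else 0) + (if t = j then y else 0) +
        (if t = k then z else 0) := by
      intro t
      rw [hw]
      by_cases h1 : t = i
      · simp [h1, hij, hik]
      · by_cases h2 : t = j
        · simp [h1, h2, hjk, Ne.symm hij]
        · by_cases h3 : t = k
          · simp [h1, h2, h3, Ne.symm hik, Ne.symm hjk]
          · simp [h1, h2, h3]
    simp only [hfun, Finset.sum_add_distrib, Finset.sum_ite_eq']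
  -- membership facts for e₀
  have hi0 : i ∈ Λ e₀ := by
    have : i ∈ Λ e₀ ∩ {i, j, k} := he₀ ▸ (by simp)
    exact (Finset.mem_inter.mp this).1
  have hj0 : j ∉ Λ e₀ := by
    intro hj
    have : j ∈ Λ e₀ ∩ {i, j, k} := Finset.mem_inter.mpr ⟨hj, by simp⟩
    rw [he₀] at this
    exact hij (Finset.mem_singleton.mp this).symm
  have hk0 : k ∉ Λ e₀ := by
    intro hk
    have : k ∈ Λ e₀ ∩ {i, j, k} := Finset.mem_inter.mpr ⟨hk, by simp⟩
    rw [he₀] at this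
    exact hik (Finset.mem_singleton.mp this).symm
  -- characterization of forbidden intersections
  have inter1 : ∀ e, i ∈ Λ e → j ∉ Λ e → k ∉ Λ e → Λ e ∩ {i, j, k} = {i} := by
    intro e ha hb hc
    ext t
    simp only [Finset.mem_inter, Finset.mem_insert, Finset.mem_singleton]
    constructor
    · rintro ⟨ht, rfl | rfl | rfl⟩
      · rfl
      · exact absurd ht hb
      · exact absurd ht hc
    · rintro rfl; exact ⟨ha, Or.inl rfl⟩
  have inter2 : ∀ e, i ∉ Λ e → j ∈ Λ e → k ∈ Λ e →
      Λ e ∩ {i, j, k} = {j, k} := by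
    intro e ha hb hc
    ext t
    simp only [Finset.mem_inter, Finset.mem_insert, Finset.mem_singleton]
    constructor
    · rintro ⟨ht, rfl | rfl | rfl⟩
      · exact absurd ht ha
      · exact Or.inl rfl
      · exact Or.inr rfl
    · rintro (rfl | rfl)
      · exact ⟨hb, Or.inr (Or.inl rfl)⟩
      · exact ⟨hc, Or.inr (Or.inr rfl)⟩
  -- key identity for e ≠ e₀
  have key : ∀ e ∈ Finset.univ.erase e₀,
      f e (∑ t ∈ Λ e, w h (-h) 0 t) * f e (∑ t ∈ Λ e, w (-h) 0 h t)
        = f e (∑ t ∈ Λ e, w 0 (-h) h t) := by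
    intro e he
    have hne : e ≠ e₀ := (Finset.mem_erase.mp he).1
    rw [hsum, hsum, hsum]
    by_cases ha : i ∈ Λ e <;> by_cases hb : j ∈ Λ e <;> by_cases hc : k ∈ Λ e
    · -- TTT
      simp only [ha, hb, hc, if_true, if_false]
      rw [show h + -h + 0 = (0 : G) by abel, show -h + 0 + h = (0 : G) by abel,
        show (0 : G) + -h + h = 0 by abel, hone]
      norm_num
    · -- TTF
      simp only [ha, hb, hc, if_true, if_false]
      rw [show h + -h + 0 = (0 : G) by abel, show -h + 0 + 0 = -h by abel,
        show (0 : G) + -h + 0 = -h by abel, hone, one_mul]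
    · -- TFT
      simp only [ha, hb, hc, if_true, if_false]
      rw [show h + 0 + 0 = h by abel, show -h + 0 + h = (0 : G) by abel,
        show (0 : G) + 0 + h = h by abel, hone, mul_one]
    · -- TFF : forbidden
      exact absurd (inter1 e ha hb hc) (hother e hne).1
    · -- FTT : forbidden
      exact absurd (inter2 e ha hb hc) (hother e hne).2
    · -- FTF
      simp only [ha, hb, hc, if_true, if_false]
      rw [show (0 : G) + -h + 0 = -h by abel, show (0 : G) + 0 + 0 = 0 by abel,
        hone, mul_one]
    · -- FFT
      simp only [ha, hb, hc, if_true, if_false]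
      rw [show (0 : G) + 0 + h = h by abel, show (0 : G) + 0 + 0 = 0 by abel,
        hone, one_mul]
    · -- FFF
      simp only [ha, hb, hc, if_true, if_false]
      rw [show (0 : G) + 0 + 0 = 0 by abel, hone]
      norm_num
  -- values at e₀
  have hA0 : (∑ t ∈ Λ e₀, w h (-h) 0 t) = h := by
    rw [hsum]; simp [hi0, hj0, hk0]
  have hB0 : (∑ t ∈ Λ e₀, w (-h) 0 h t) = -h := by
    rw [hsum]; simp [hi0, hj0, hk0]
  have hC0 : (∑ t ∈ Λ e₀, w 0 (-h) h t) = 0 := by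
    rw [hsum]; simp [hi0, hj0, hk0]
  have hqC : 0 < q (w 0 (-h) h) := by
    rw [hq]; exact Finset.prod_pos fun e _ => hpos e _
  rw [hq, hq, hq]
  rw [← Finset.mul_prod_erase Finset.univ _ (Finset.mem_univ e₀),
    ← Finset.mul_prod_erase Finset.univ
      (fun e => f e (∑ t ∈ Λ e, w (-h) 0 h t)) (Finset.mem_univ e₀),
    ← Finset.mul_prod_erase Finset.univ
      (fun e => f e (∑ t ∈ Λ e, w 0 (-h) h t)) (Finset.mem_univ e₀)]
  rw [hA0, hB0, hC0, hone, one_mul]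
  rw [eq_div_iff (by
    have := hqC
    rw [hq, ← Finset.mul_prod_erase Finset.univ
      (fun e => f e (∑ t ∈ Λ e, w 0 (-h) h t)) (Finset.mem_univ e₀),
      hC0, hone, one_mul] at this
    exact ne_of_gt this)]
  have hprod : (∏ e ∈ Finset.univ.erase e₀, f e (∑ t ∈ Λ e, w h (-h) 0 t)) *
      (∏ e ∈ Finset.univ.erase e₀, f e (∑ t ∈ Λ e, w (-h) 0 h t)) =
      ∏ e ∈ Finset.univ.erase e₀, f e (∑ t ∈ Λ e, w 0 (-h) h t) := by
    rw [← Finset.prod_mul_distrib]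
    exact Finset.prod_congr rfl key
  calc f e₀ h ^ 2 * ∏ e ∈ Finset.univ.erase e₀, f e (∑ t ∈ Λ e, w 0 (-h) h t)
      = (f e₀ h * f e₀ (-h)) *
        ((∏ e ∈ Finset.univ.erase e₀, f e (∑ t ∈ Λ e, w h (-h) 0 t)) *
         (∏ e ∈ Finset.univ.erase e₀, f e (∑ t ∈ Λ e, w (-h) 0 h t))) := by
        rw [hprod, ← hsymm]; ring
    _ = f e₀ h * (∏ e ∈ Finset.univ.erase e₀, f e (∑ t ∈ Λ e, w h (-h) 0 t)) *
        (f e₀ (-h) * ∏ e ∈ Finset.univ.erase e₀, f e (∑ t ∈ Λ e, w (-h) 0 h t)) := by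
        ring
end

section
/- Let G be an (additive) abelian group, E a finite set, n a natural number, Λ : E → Finset (Fin n), and for each e ∈ E a function f̌_e : G → ℝ such that for all e and g: f̌_e(g) > 0, f̌_e(0) = 1, and f̌_e(g) = f̌_e(−g). Define q : (Fin n → G) → ℝ by q(g) = ∏_{e ∈ E} f̌_e(∑_{i ∈ Λ(e)} g_i). Suppose e₀ ∈ E and i, j, i', j' ∈ Fin n are pairwise distinct, Λ(e₀) ∩ {i,j,i',j'} = {i',j'}, and for every e ≠ e₀ the set Λ(e) ∩ {i,j,i',j'} is none of {i,j}, {i',j'}, {i,i'}, {j,j'}. Then for every h ∈ G, f̌_{e₀}(h)² = q(z(h,0,−h,0)) · q(z(0,−h,0,h)) / ( q(z(h,−h,0,0)) · q(z(0,0,−h,h)) ), where z(x,y,x',y') : Fin n → G assigns x to i, y to j, x' to i', y' to j', and 0 to every other index. -/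
set_option maxHeartbeats 1000000

lemma inter_quad_eq {n : ℕ} (s : Finset (Fin n)) (a b c d : Fin n)
    (ha : a ∈ s) (hb : b ∈ s) (hc : c ∉ s) (hd : d ∉ s) :
    s ∩ {a, b, c, d} = {a, b} := by
  ext t
  simp only [Finset.mem_inter, Finset.mem_insert, Finset.mem_singleton]
  constructor
  · rintro ⟨hts, rfl | rfl | rfl | rfl⟩
    · exact Or.inl rfl
    · exact Or.inr rfl
    · exact absurd hts hc
    · exact absurd hts hd
  · rintro (rfl | rfl)
    · exact ⟨ha, Or.inl rfl⟩
    · exact ⟨hb, Or.inr (Or.inl rfl)⟩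

/-- Matsen's Proposition 3.4: recovering an internal-edge Fourier parameter from the
Fourier-transformed leaf probabilities of a symmetric group-based model. -/
theorem matsen_internal_edge
    {G : Type*} [AddCommGroup G] {E : Type*} [Fintype E] {n : ℕ}
    (Λ : E → Finset (Fin n)) (f : E → G → ℝ)
    (hpos : ∀ e g, 0 < f e g) (hone : ∀ e, f e 0 = 1)
    (hsymm : ∀ e g, f e g = f e (-g))
    (q : (Fin n → G) → ℝ)
    (hq : ∀ g : Fin n → G, q g = ∏ e, f e (∑ i ∈ Λ e, g i))
    (e₀ : E) (i j i' j' : Fin n)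
    (hij : i ≠ j) (hii' : i ≠ i') (hij' : i ≠ j')
    (hji' : j ≠ i') (hjj' : j ≠ j') (hi'j' : i' ≠ j')
    (he₀ : Λ e₀ ∩ {i, j, i', j'} = {i', j'})
    (hother : ∀ e, e ≠ e₀ →
      Λ e ∩ {i, j, i', j'} ≠ {i, j} ∧ Λ e ∩ {i, j, i', j'} ≠ {i', j'} ∧
      Λ e ∩ {i, j, i', j'} ≠ {i, i'} ∧ Λ e ∩ {i, j, i', j'} ≠ {j, j'})
    (z : G → G → G → G → Fin n → G)
    (hz : ∀ x y x' y' t, z x y x' y' t =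
      if t = i then x else if t = j then y else
      if t = i' then x' else if t = j' then y' else 0) :
    ∀ h : G, (f e₀ h) ^ 2 =
      q (z h 0 (-h) 0) * q (z 0 (-h) 0 h) /
        (q (z h (-h) 0 0) * q (z 0 0 (-h) h)) := by
  classical
  intro h
  -- sums of z over Λ e
  have hsum : ∀ (x y x' y' : G) (e : E), (∑ t ∈ Λ e, z x y x' y' t) =
      (if i ∈ Λ e then x else 0) + (if j ∈ Λ e then y else 0) +
      (if i' ∈ Λ e then x' else 0) + (if j' ∈ Λ e then y' else 0) := by
    intro x y x' y' e
    have hpt : ∀ t, z x y x' y' t =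
        (if t = i then x else 0) + (if t = j then y else 0) +
        (if t = i' then x' else 0) + (if t = j' then y' else 0) := by
      intro t
      rw [hz]
      by_cases h1 : t = i
      · subst h1; simp [hij, hii', hij']
      rw [if_neg h1]
      by_cases h2 : t = j
      · subst h2; simp [h1, hji', hjj', Ne.symm hij]
      rw [if_neg h2]
      by_cases h3 : t = i'
      · subst h3; simp [h1, h2, hi'j', Ne.symm hii', Ne.symm hji']
      rw [if_neg h3]
      by_cases h4 : t = j'
      · subst h4; simp [h1, h2, h3, Ne.symm hij', Ne.symm hjj', Ne.symm hi'j']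
      rw [if_neg h4]; simp [h1, h2, h3, h4]
    rw [Finset.sum_congr rfl (fun t _ => hpt t)]
    simp [Finset.sum_add_distrib, Finset.sum_ite_eq']
  -- membership facts for e₀
  have hi'₀ : i' ∈ Λ e₀ := by
    have : i' ∈ Λ e₀ ∩ {i, j, i', j'} := by rw [he₀]; simp
    exact (Finset.mem_inter.mp this).1
  have hj'₀ : j' ∈ Λ e₀ := by
    have : j' ∈ Λ e₀ ∩ {i, j, i', j'} := by rw [he₀]; simp
    exact (Finset.mem_inter.mp this).1
  have hi₀ : i ∉ Λ e₀ := by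
    intro hmem
    have : i ∈ Λ e₀ ∩ {i, j, i', j'} := Finset.mem_inter.mpr ⟨hmem, by simp⟩
    rw [he₀] at this
    simp only [Finset.mem_insert, Finset.mem_singleton] at this
    rcases this with h' | h' <;> [exact hii' h'; exact hij' h']
  have hj₀ : j ∉ Λ e₀ := by
    intro hmem
    have : j ∈ Λ e₀ ∩ {i, j, i', j'} := Finset.mem_inter.mpr ⟨hmem, by simp⟩
    rw [he₀] at this
    simp only [Finset.mem_insert, Finset.mem_singleton] at this
    rcases this with h' | h' <;> [exact hji' h'; exact hjj' h']
  -- per-edge key identity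
  have key : ∀ e ∈ Finset.univ, f e (∑ t ∈ Λ e, z h 0 (-h) 0 t) * f e (∑ t ∈ Λ e, z 0 (-h) 0 h t)
      = (if e = e₀ then (f e₀ h) ^ 2 else 1) *
        (f e (∑ t ∈ Λ e, z h (-h) 0 0 t) * f e (∑ t ∈ Λ e, z 0 0 (-h) h t)) := by
    intro e _
    rw [hsum, hsum, hsum, hsum]
    by_cases he : e = e₀
    · subst he
      rw [if_pos rfl]
      simp only [hi₀, hj₀, hi'₀, hj'₀, if_true, if_false, if_neg, not_false_iff]
      simp [hone, ← hsymm]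
      ring
    · obtain ⟨h1, h2, h3, h4⟩ := hother e he
      rw [if_neg he, one_mul]
      have hquad2 : ({i, j, i', j'} : Finset (Fin n)) = {i', j', i, j} := by
        ext t; simp only [Finset.mem_insert, Finset.mem_singleton]; tauto
      have hquad3 : ({i, j, i', j'} : Finset (Fin n)) = {i, i', j, j'} := by
        ext t; simp only [Finset.mem_insert, Finset.mem_singleton]; tauto
      have hquad4 : ({i, j, i', j'} : Finset (Fin n)) = {j, j', i, i'} := by
        ext t; simp only [Finset.mem_insert, Finset.mem_singleton]; tauto
      rw [hquad2] at h2
      rw [hquad3] at h3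
      rw [hquad4] at h4
      by_cases hA : i ∈ Λ e <;> by_cases hB : j ∈ Λ e <;>
        by_cases hC : i' ∈ Λ e <;> by_cases hD : j' ∈ Λ e
      all_goals first
        | (exact absurd (inter_quad_eq (Λ e) i j i' j' hA hB hC hD) h1)
        | (exact absurd (inter_quad_eq (Λ e) i' j' i j hC hD hA hB) h2)
        | (exact absurd (inter_quad_eq (Λ e) i i' j j' hA hC hB hD) h3)
        | (exact absurd (inter_quad_eq (Λ e) j j' i i' hB hD hA hC) h4)
        | (simp only [hA, hB, hC, hD, if_true, if_false, ite_true, ite_false,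
             if_pos, if_neg, zero_add, add_zero]
           try simp [hone, ← hsymm]
           try ring)
  -- put it together
  have hd1 : 0 < q (z h (-h) 0 0) := by
    rw [hq]; exact Finset.prod_pos fun e _ => hpos e _
  have hd2 : 0 < q (z 0 0 (-h) h) := by
    rw [hq]; exact Finset.prod_pos fun e _ => hpos e _
  have hprod : (∏ e, (if e = e₀ then (f e₀ h) ^ 2 else 1)) = (f e₀ h) ^ 2 := by
    simp
  have main : (∏ e, f e (∑ t ∈ Λ e, z h 0 (-h) 0 t)) * (∏ e, f e (∑ t ∈ Λ e, z 0 (-h) 0 h t))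
      = (f e₀ h) ^ 2 *
        ((∏ e, f e (∑ t ∈ Λ e, z h (-h) 0 0 t)) * (∏ e, f e (∑ t ∈ Λ e, z 0 0 (-h) h t))) := by
    rw [← Finset.prod_mul_distrib, Finset.prod_congr rfl key, Finset.prod_mul_distrib, hprod,
      Finset.prod_mul_distrib]
  rw [eq_div_iff (by positivity), hq, hq, hq, hq, main]
end

section
/- Let p : {0,1}³ → ℝ, written p_{abc}, and for (i,j,k) ∈ {0,1}³ define the Fourier coordinates q_{ijk} = ∑_{a,b,c ∈ {0,1}} (−1)^{i·a + j·b + k·c} p_{abc}. Then the following are equivalent. (i) There exist real numbers π₀, π₁, α₁, β₁, α₂, β₂, α₃, β₃, all nonnegative, with π₀ + π₁ = 1, α_i + β_i = 1 for i = 1,2,3, π₀ > π₁, α_i > β_i for i = 1,2,3, and p_{abc} = π₀·x₁(a)·x₂(b)·x₃(c) + π₁·y₁(a)·y₂(b)·y₃(c) for all a,b,c, where x_i(0) = α_i, x_i(1) = β_i, y_i(0) = β_i, y_i(1) = α_i. (ii) q_{000} = 1; q_{ijk} > 0 for every (i,j,k) ≠ (0,0,0); q_{001}·q_{110} = q_{000}·q_{111},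 q_{010}·q_{101} = q_{000}·q_{111} and q_{100}·q_{011} = q_{000}·q_{111}; and q_{000}·q_{110} ≥ q_{100}·q_{010}, q_{000}·q_{011} ≥ q_{110}·q_{101}, q_{000}·q_{001} ≥ q_{011}·q_{010}, q_{000}·q_{100} ≥ q_{001}·q_{101}. -/
/-!
In Fourier coordinates the CFN tripod model becomes monomial: with `s = π₀ - π₁` and
`dᵢ = αᵢ - βᵢ`, one gets `q_{ijk} = s^[i+j+k odd] · d₁^i d₂^j d₃^k`, and the constraints on the
parameters say exactly `s, dᵢ ∈ (0, 1]`. Conversely, a positive `q` with `q₀₀₀ = 1` satisfying the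
three binomial equations is such a monomial point: `s² = q₁₀₀ q₀₁₀ / q₁₁₀` and
`(d₁, d₂, d₃) = (q₁₀₀, q₀₁₀, q₀₀₁) / s`. On monomial points the four quadratic inequalities read
`s² ≤ 1` and `dᵢ² ≤ 1`. Since the Fourier transform is invertible, the two descriptions agree.
-/

open Set

theorem sq_mul_le_iff_le_one {x y : ℝ} (hx : 0 ≤ x) (hy : 0 < y) : x ^ 2 * y ≤ y ↔ x ≤ 1 := by
  rw [mul_le_iff_le_one_left hy, pow_le_one_iff_of_nonneg hx two_ne_zero]

namespace CFN

def fourier (p : Fin 2 → Fin 2 → Fin 2 → ℝ) : Fin 2 → Fin 2 → Fin 2 → ℝ :=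
  fun i j k => ∑ a : Fin 2, ∑ b : Fin 2, ∑ c : Fin 2,
    (-1 : ℝ) ^ (i.val * a.val + j.val * b.val + k.val * c.val) * p a b c

theorem fourier_fourier (p : Fin 2 → Fin 2 → Fin 2 → ℝ) : fourier (fourier p) = (8 : ℝ) • p := by
  funext a b c
  fin_cases a <;> fin_cases b <;> fin_cases c <;> simp [fourier, Fin.sum_univ_two] <;> ring

theorem fourier_injective : Function.Injective fourier := fun p p' h =>
  smul_right_injective _ (by norm_num : (8 : ℝ) ≠ 0) <| by
    simpa only [fourier_fourier] using congrArg fourier h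

def tripodDist (π₀ π₁ α₁ β₁ α₂ β₂ α₃ β₃ : ℝ) (a b c : Fin 2) : ℝ :=
  π₀ * (if a = 0 then α₁ else β₁) * (if b = 0 then α₂ else β₂) * (if c = 0 then α₃ else β₃) +
    π₁ * (if a = 0 then β₁ else α₁) * (if b = 0 then β₂ else α₂) * (if c = 0 then β₃ else α₃)

/-- The exponent of `s` is the parity of `i + j + k`, computed in `Fin 2`. -/
def tripodMonomial (s d₁ d₂ d₃ : ℝ) (i j k : Fin 2) : ℝ :=
  s ^ (i + j + k).val * d₁ ^ i.val * d₂ ^ j.val * d₃ ^ k.val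

theorem fourier_tripodDist {π₀ π₁ α₁ β₁ α₂ β₂ α₃ β₃ : ℝ} (hπ : π₀ + π₁ = 1)
    (h₁ : α₁ + β₁ = 1) (h₂ : α₂ + β₂ = 1) (h₃ : α₃ + β₃ = 1) :
    fourier (tripodDist π₀ π₁ α₁ β₁ α₂ β₂ α₃ β₃) =
      tripodMonomial (π₀ - π₁) (α₁ - β₁) (α₂ - β₂) (α₃ - β₃) := by
  obtain rfl : π₁ = 1 - π₀ := by linarith
  obtain rfl : β₁ = 1 - α₁ := by linarith
  obtain rfl : β₂ = 1 - α₂ := by linarith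
  obtain rfl : β₃ = 1 - α₃ := by linarith
  funext i j k
  fin_cases i <;> fin_cases j <;> fin_cases k <;>
    simp [fourier, tripodDist, tripodMonomial, Fin.sum_univ_two] <;> ring

section Monomial

variable {q : Fin 2 → Fin 2 → Fin 2 → ℝ} {s d₁ d₂ d₃ : ℝ}

theorem tripodMonomial_pos (hs : 0 < s) (hd₁ : 0 < d₁) (hd₂ : 0 < d₂) (hd₃ : 0 < d₃)
    (i j k : Fin 2) : 0 < tripodMonomial s d₁ d₂ d₃ i j k := by
  unfold tripodMonomial
  positivity

theorem tripodMonomial_binomials (hq : q = tripodMonomial s d₁ d₂ d₃) :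
    q 0 0 1 * q 1 1 0 = q 0 0 0 * q 1 1 1 ∧
      q 0 1 0 * q 1 0 1 = q 0 0 0 * q 1 1 1 ∧
      q 1 0 0 * q 0 1 1 = q 0 0 0 * q 1 1 1 := by
  subst hq
  refine ⟨?_, ?_, ?_⟩ <;> simp [tripodMonomial] <;> ring

theorem tripodMonomial_inequalities_iff (hq : q = tripodMonomial s d₁ d₂ d₃) (hs : 0 < s)
    (hd₁ : 0 < d₁) (hd₂ : 0 < d₂) (hd₃ : 0 < d₃) :
    (q 1 0 0 * q 0 1 0 ≤ q 0 0 0 * q 1 1 0 ∧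
      q 1 1 0 * q 1 0 1 ≤ q 0 0 0 * q 0 1 1 ∧
      q 0 1 1 * q 0 1 0 ≤ q 0 0 0 * q 0 0 1 ∧
      q 0 0 1 * q 1 0 1 ≤ q 0 0 0 * q 1 0 0) ↔
    s ≤ 1 ∧ d₁ ≤ 1 ∧ d₂ ≤ 1 ∧ d₃ ≤ 1 := by
  subst hq
  rw [← sq_mul_le_iff_le_one hs.le (mul_pos hd₁ hd₂),
    ← sq_mul_le_iff_le_one hd₁.le (mul_pos hd₂ hd₃),
    ← sq_mul_le_iff_le_one hd₂.le (mul_pos hs hd₃),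
    ← sq_mul_le_iff_le_one hd₃.le (mul_pos hs hd₁)]
  simp only [tripodMonomial, Fin.isValue, Fin.reduceAdd, Fin.val_zero, Fin.val_one, pow_zero,
    pow_one, mul_one, one_mul]
  ring_nf

end Monomial

theorem exists_eq_tripodMonomial {q : Fin 2 → Fin 2 → Fin 2 → ℝ} (h₀ : q 0 0 0 = 1)
    (hpos : ∀ i j k : Fin 2, ¬(i = 0 ∧ j = 0 ∧ k = 0) → 0 < q i j k)
    (h₁ : q 0 0 1 * q 1 1 0 = q 0 0 0 * q 1 1 1)
    (h₂ : q 0 1 0 * q 1 0 1 = q 0 0 0 * q 1 1 1)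
    (h₃ : q 1 0 0 * q 0 1 1 = q 0 0 0 * q 1 1 1) :
    ∃ s d₁ d₂ d₃ : ℝ, 0 < s ∧ 0 < d₁ ∧ 0 < d₂ ∧ 0 < d₃ ∧ q = tripodMonomial s d₁ d₂ d₃ := by
  have h100 := hpos 1 0 0 (by decide)
  have h010 := hpos 0 1 0 (by decide)
  have h001 := hpos 0 0 1 (by decide)
  have h110 := hpos 1 1 0 (by decide)
  set s := √(q 1 0 0 * q 0 1 0 / q 1 1 0)
  have hs : 0 < s := by positivity
  have hs2 : s ^ 2 * q 1 1 0 = q 1 0 0 * q 0 1 0 := by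
    rw [Real.sq_sqrt (by positivity), div_mul_cancel₀ _ h110.ne']
  refine ⟨s, q 1 0 0 / s, q 0 1 0 / s, q 0 0 1 / s, hs, by positivity, by positivity,
    by positivity, ?_⟩
  rw [h₀, one_mul] at h₁ h₂ h₃
  funext i j k
  fin_cases i <;> fin_cases j <;> fin_cases k <;>
    simp only [tripodMonomial, Fin.isValue, Fin.zero_eta, Fin.mk_one, Fin.reduceAdd,
      Fin.val_zero, Fin.val_one, pow_zero, pow_one, mul_one, one_mul] <;> field_simp
  · exact h₀
  all_goals apply mul_right_cancel₀ h110.ne'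
  · linear_combination q 0 1 1 * hs2 + q 0 1 0 * h₃ - q 0 1 0 * h₁
  · linear_combination q 1 0 1 * hs2 + q 1 0 0 * h₂ - q 1 0 0 * h₁
  · linear_combination q 1 1 0 * hs2
  · linear_combination q 1 1 1 * hs2 - q 1 0 0 * q 0 1 0 * h₁

def IsTripodDist (p : Fin 2 → Fin 2 → Fin 2 → ℝ) : Prop :=
  ∃ π₀ π₁ α₁ β₁ α₂ β₂ α₃ β₃ : ℝ,
    0 ≤ π₀ ∧ 0 ≤ π₁ ∧ 0 ≤ α₁ ∧ 0 ≤ β₁ ∧ 0 ≤ α₂ ∧ 0 ≤ β₂ ∧ 0 ≤ α₃ ∧ 0 ≤ β₃ ∧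
    π₀ + π₁ = 1 ∧ α₁ + β₁ = 1 ∧ α₂ + β₂ = 1 ∧ α₃ + β₃ = 1 ∧
    π₁ < π₀ ∧ β₁ < α₁ ∧ β₂ < α₂ ∧ β₃ < α₃ ∧
    ∀ a b c : Fin 2, p a b c = tripodDist π₀ π₁ α₁ β₁ α₂ β₂ α₃ β₃ a b c

def IsTripodFourier (q : Fin 2 → Fin 2 → Fin 2 → ℝ) : Prop :=
  q 0 0 0 = 1 ∧
    (∀ i j k : Fin 2, ¬(i = 0 ∧ j = 0 ∧ k = 0) → 0 < q i j k) ∧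
    q 0 0 1 * q 1 1 0 = q 0 0 0 * q 1 1 1 ∧
    q 0 1 0 * q 1 0 1 = q 0 0 0 * q 1 1 1 ∧
    q 1 0 0 * q 0 1 1 = q 0 0 0 * q 1 1 1 ∧
    q 1 0 0 * q 0 1 0 ≤ q 0 0 0 * q 1 1 0 ∧
    q 1 1 0 * q 1 0 1 ≤ q 0 0 0 * q 0 1 1 ∧
    q 0 1 1 * q 0 1 0 ≤ q 0 0 0 * q 0 0 1 ∧
    q 0 0 1 * q 1 0 1 ≤ q 0 0 0 * q 1 0 0

theorem isTripodDist_iff (p : Fin 2 → Fin 2 → Fin 2 → ℝ) :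
    IsTripodDist p ↔ ∃ s ∈ Ioc (0 : ℝ) 1, ∃ d₁ ∈ Ioc (0 : ℝ) 1, ∃ d₂ ∈ Ioc (0 : ℝ) 1,
      ∃ d₃ ∈ Ioc (0 : ℝ) 1, fourier p = tripodMonomial s d₁ d₂ d₃ := by
  constructor
  · rintro ⟨π₀, π₁, α₁, β₁, α₂, β₂, α₃, β₃, -, hπ₁, -, hβ₁, -, hβ₂, -, hβ₃, hπ, h₁, h₂, h₃,
      hlt, hlt₁, hlt₂, hlt₃, hp⟩
    refine ⟨π₀ - π₁, ⟨by linarith, by linarith⟩, α₁ - β₁, ⟨by linarith, by linarith⟩,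
      α₂ - β₂, ⟨by linarith, by linarith⟩, α₃ - β₃, ⟨by linarith, by linarith⟩, ?_⟩
    rw [← fourier_tripodDist hπ h₁ h₂ h₃]
    exact congrArg fourier (funext₃ hp)
  · rintro ⟨s, ⟨hs₀, hs₁⟩, d₁, ⟨hd₁₀, hd₁₁⟩, d₂, ⟨hd₂₀, hd₂₁⟩, d₃, ⟨hd₃₀, hd₃₁⟩, hp⟩
    have hdist : p = tripodDist ((1 + s) / 2) ((1 - s) / 2) ((1 + d₁) / 2) ((1 - d₁) / 2)
        ((1 + d₂) / 2) ((1 - d₂) / 2) ((1 + d₃) / 2) ((1 - d₃) / 2) := by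
      refine fourier_injective (hp.trans ?_)
      rw [fourier_tripodDist (by ring) (by ring) (by ring) (by ring)]
      congr 1 <;> ring
    exact ⟨(1 + s) / 2, (1 - s) / 2, (1 + d₁) / 2, (1 - d₁) / 2, (1 + d₂) / 2, (1 - d₂) / 2,
      (1 + d₃) / 2, (1 - d₃) / 2, by linarith, by linarith, by linarith, by linarith,
      by linarith, by linarith, by linarith, by linarith, by ring, by ring, by ring, by ring,
      by linarith, by linarith, by linarith, by linarith, fun a b c => by rw [hdist]⟩

theorem isTripodFourier_iff (q : Fin 2 → Fin 2 → Fin 2 → ℝ) :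
    IsTripodFourier q ↔ ∃ s ∈ Ioc (0 : ℝ) 1, ∃ d₁ ∈ Ioc (0 : ℝ) 1, ∃ d₂ ∈ Ioc (0 : ℝ) 1,
      ∃ d₃ ∈ Ioc (0 : ℝ) 1, q = tripodMonomial s d₁ d₂ d₃ := by
  constructor
  · rintro ⟨h₀, hpos, h₁, h₂, h₃, hle⟩
    obtain ⟨s, d₁, d₂, d₃, hs, hd₁, hd₂, hd₃, hq⟩ := exists_eq_tripodMonomial h₀ hpos h₁ h₂ h₃
    obtain ⟨hs₁, hd₁₁, hd₂₁, hd₃₁⟩ := (tripodMonomial_inequalities_iff hq hs hd₁ hd₂ hd₃).1 hle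
    exact ⟨s, ⟨hs, hs₁⟩, d₁, ⟨hd₁, hd₁₁⟩, d₂, ⟨hd₂, hd₂₁⟩, d₃, ⟨hd₃, hd₃₁⟩, hq⟩
  · rintro ⟨s, ⟨hs₀, hs₁⟩, d₁, ⟨hd₁₀, hd₁₁⟩, d₂, ⟨hd₂₀, hd₂₁⟩, d₃, ⟨hd₃₀, hd₃₁⟩, hq⟩
    obtain ⟨h₁, h₂, h₃⟩ := tripodMonomial_binomials hq
    exact ⟨by simp [hq, tripodMonomial],
      fun i j k _ => hq ▸ tripodMonomial_pos hs₀ hd₁₀ hd₂₀ hd₃₀ i j k, h₁, h₂, h₃,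
      (tripodMonomial_inequalities_iff hq hs₀ hd₁₀ hd₂₀ hd₃₀).2 ⟨hs₁, hd₁₁, hd₂₁, hd₃₁⟩⟩

end CFN

/-- The semialgebraic description of the CFN model on the tripod tree `K_{1,3}`
(Example 3.1 of the paper). -/
theorem cfn_tripod_semialgebraic_description
    (p : Fin 2 → Fin 2 → Fin 2 → ℝ) (q : Fin 2 → Fin 2 → Fin 2 → ℝ)
    (hq : ∀ i j k : Fin 2, q i j k =
      ∑ a : Fin 2, ∑ b : Fin 2, ∑ c : Fin 2,
        (-1 : ℝ) ^ (i.val * a.val + j.val * b.val + k.val * c.val) * p a b c) :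
    (∃ π₀ π₁ α₁ β₁ α₂ β₂ α₃ β₃ : ℝ,
      0 ≤ π₀ ∧ 0 ≤ π₁ ∧ 0 ≤ α₁ ∧ 0 ≤ β₁ ∧ 0 ≤ α₂ ∧ 0 ≤ β₂ ∧ 0 ≤ α₃ ∧ 0 ≤ β₃ ∧
      π₀ + π₁ = 1 ∧ α₁ + β₁ = 1 ∧ α₂ + β₂ = 1 ∧ α₃ + β₃ = 1 ∧
      π₁ < π₀ ∧ β₁ < α₁ ∧ β₂ < α₂ ∧ β₃ < α₃ ∧
      ∀ a b c : Fin 2, p a b c =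
        π₀ * (if a = 0 then α₁ else β₁) * (if b = 0 then α₂ else β₂) *
          (if c = 0 then α₃ else β₃) +
        π₁ * (if a = 0 then β₁ else α₁) * (if b = 0 then β₂ else α₂) *
          (if c = 0 then β₃ else α₃))
    ↔
    (q 0 0 0 = 1 ∧
      (∀ i j k : Fin 2, ¬(i = 0 ∧ j = 0 ∧ k = 0) → 0 < q i j k) ∧
      q 0 0 1 * q 1 1 0 = q 0 0 0 * q 1 1 1 ∧
      q 0 1 0 * q 1 0 1 = q 0 0 0 * q 1 1 1 ∧
      q 1 0 0 * q 0 1 1 = q 0 0 0 * q 1 1 1 ∧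
      q 1 0 0 * q 0 1 0 ≤ q 0 0 0 * q 1 1 0 ∧
      q 1 1 0 * q 1 0 1 ≤ q 0 0 0 * q 0 1 1 ∧
      q 0 1 1 * q 0 1 0 ≤ q 0 0 0 * q 0 0 1 ∧
      q 0 0 1 * q 1 0 1 ≤ q 0 0 0 * q 1 0 0) := by
  change CFN.IsTripodDist p ↔ CFN.IsTripodFourier q
  obtain rfl : q = CFN.fourier p := funext₃ hq
  rw [CFN.isTripodDist_iff, CFN.isTripodFourier_iff]
end

section
/- Let π₀, π₁, α₁, β₁, α₂, β₂, α₃, β₃ be nonnegative real numbers with π₀ + π₁ = 1, α_i + β_i = 1 for i = 1,2,3, π₀ > π₁ and α_i > β_i for i = 1,2,3. Define p_{abc} = π₀·x₁(a)·x₂(b)·x₃(c) + π₁·y₁(a)·y₂(b)·y₃(c) for a,b,c ∈ {0,1}, where x_i(0) = α_i, x_i(1) = β_i, y_i(0) = β_i, y_i(1) = α_i, and define q_{ijk} = ∑_{a,b,c ∈ {0,1}} (−1)^{i·a + j·b + k·c} p_{abc}. Then: if q_{000}·q_{110} = q_{100}·q_{010} then π₁ = 0; if q_{000}·q_{011} =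 q_{110}·q_{101} then β₁ = 0; if q_{000}·q_{001} = q_{011}·q_{010} then β₂ = 0; and if q_{000}·q_{100} = q_{001}·q_{101} then β₃ = 0. -/
set_option maxHeartbeats 1600000 in
/-- Corollary 3.1 of the paper, made explicit for the CFN model on the tripod `K_{1,3}`:
a point satisfying one of the defining non-strict inequalities with equality comes from a
parametrization with some mutation matrix equal to the identity. -/
theorem cfn_tripod_boundary
    (π₀ π₁ α₁ β₁ α₂ β₂ α₃ β₃ : ℝ)
    (hπ₀ : 0 ≤ π₀) (hπ₁ : 0 ≤ π₁) (hα₁ : 0 ≤ α₁) (hβ₁ : 0 ≤ β₁)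
    (hα₂ : 0 ≤ α₂) (hβ₂ : 0 ≤ β₂) (hα₃ : 0 ≤ α₃) (hβ₃ : 0 ≤ β₃)
    (hπ : π₀ + π₁ = 1) (h₁ : α₁ + β₁ = 1) (h₂ : α₂ + β₂ = 1) (h₃ : α₃ + β₃ = 1)
    (hπlt : π₁ < π₀) (h₁lt : β₁ < α₁) (h₂lt : β₂ < α₂) (h₃lt : β₃ < α₃)
    (p : Fin 2 → Fin 2 → Fin 2 → ℝ)
    (hp : ∀ a b c : Fin 2, p a b c =
      π₀ * (if a = 0 then α₁ else β₁) * (if b = 0 then α₂ else β₂) *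
        (if c = 0 then α₃ else β₃) +
      π₁ * (if a = 0 then β₁ else α₁) * (if b = 0 then β₂ else α₂) *
        (if c = 0 then β₃ else α₃))
    (q : Fin 2 → Fin 2 → Fin 2 → ℝ)
    (hq : ∀ i j k : Fin 2, q i j k =
      ∑ a : Fin 2, ∑ b : Fin 2, ∑ c : Fin 2,
        (-1 : ℝ) ^ (i.val * a.val + j.val * b.val + k.val * c.val) * p a b c) :
    (q 0 0 0 * q 1 1 0 = q 1 0 0 * q 0 1 0 → π₁ = 0) ∧
    (q 0 0 0 * q 0 1 1 = q 1 1 0 * q 1 0 1 → β₁ = 0) ∧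
    (q 0 0 0 * q 0 0 1 = q 0 1 1 * q 0 1 0 → β₂ = 0) ∧
    (q 0 0 0 * q 1 0 0 = q 0 0 1 * q 1 0 1 → β₃ = 0) := by
  have e000 : q 0 0 0 = 1 := by
    rw [hq]; simp [Fin.sum_univ_two, hp]
    linear_combination ((α₁+β₁)*(α₂+β₂)*(α₃+β₃))*hπ + ((α₂+β₂)*(α₃+β₃))*h₁ + (α₃+β₃)*h₂ + h₃
  have e110 : q 1 1 0 = (α₁ - β₁) * (α₂ - β₂) := by
    rw [hq]; simp [Fin.sum_univ_two, hp]
    linear_combination ((α₁-β₁)*(α₂-β₂)*(α₃+β₃))*hπ + ((α₁-β₁)*(α₂-β₂))*h₃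
  have e101 : q 1 0 1 = (α₁ - β₁) * (α₃ - β₃) := by
    rw [hq]; simp [Fin.sum_univ_two, hp]
    linear_combination ((α₁-β₁)*(α₃-β₃)*(α₂+β₂))*hπ + ((α₁-β₁)*(α₃-β₃))*h₂
  have e011 : q 0 1 1 = (α₂ - β₂) * (α₃ - β₃) := by
    rw [hq]; simp [Fin.sum_univ_two, hp]
    linear_combination ((α₂-β₂)*(α₃-β₃)*(α₁+β₁))*hπ + ((α₂-β₂)*(α₃-β₃))*h₁
  have e100 : q 1 0 0 = (α₁ - β₁) * (π₀ - π₁) := by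
    rw [hq]; simp [Fin.sum_univ_two, hp]
    linear_combination ((α₁-β₁)*(π₀-π₁)*(α₃+β₃))*h₂ + ((α₁-β₁)*(π₀-π₁))*h₃
  have e010 : q 0 1 0 = (α₂ - β₂) * (π₀ - π₁) := by
    rw [hq]; simp [Fin.sum_univ_two, hp]
    linear_combination ((α₂-β₂)*(π₀-π₁)*(α₃+β₃))*h₁ + ((α₂-β₂)*(π₀-π₁))*h₃
  have e001 : q 0 0 1 = (α₃ - β₃) * (π₀ - π₁) := by
    rw [hq]; simp [Fin.sum_univ_two, hp]
    linear_combination ((α₃-β₃)*(π₀-π₁)*(α₂+β₂))*h₁ + ((α₃-β₃)*(π₀-π₁))*h₂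
  have d1 : 0 < α₁ - β₁ := by linarith
  have d2 : 0 < α₂ - β₂ := by linarith
  have d3 : 0 < α₃ - β₃ := by linarith
  have dπ : 0 < π₀ - π₁ := by linarith
  refine ⟨?_, ?_, ?_, ?_⟩ <;> intro h
  · rw [e000, e110, e100, e010] at h
    have key : ((α₁-β₁)*(α₂-β₂)) * (1 - (π₀-π₁)^2) = 0 := by linear_combination h
    rcases mul_eq_zero.mp key with k | k
    · nlinarith [mul_pos d1 d2]
    · nlinarith [k, hπlt, hπ₁, hπ, sq_nonneg π₁]
  · rw [e000, e011, e110, e101] at h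
    have key : ((α₂-β₂)*(α₃-β₃)) * (1 - (α₁-β₁)^2) = 0 := by linear_combination h
    rcases mul_eq_zero.mp key with k | k
    · nlinarith [mul_pos d2 d3]
    · nlinarith [k, h₁lt, hβ₁, h₁, sq_nonneg β₁]
  · rw [e000, e001, e011, e010] at h
    have key : ((α₃-β₃)*(π₀-π₁)) * (1 - (α₂-β₂)^2) = 0 := by linear_combination h
    rcases mul_eq_zero.mp key with k | k
    · nlinarith [mul_pos d3 dπ]
    · nlinarith [k, h₂lt, hβ₂, h₂, sq_nonneg β₂]
  · rw [e000, e100, e001, e101] at h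
    have key : ((α₁-β₁)*(π₀-π₁)) * (1 - (α₃-β₃)^2) = 0 := by linear_combination h
    rcases mul_eq_zero.mp key with k | k
    · nlinarith [mul_pos d1 dπ]
    · nlinarith [k, h₃lt, hβ₃, h₃, sq_nonneg β₃]
end

section
/- Let G be a finite abelian group (written additively) and let f : G → ℝ satisfy f(g) ≥ 0 for all g, ∑_{g∈G} f(g) = 1, and f(g) = f(−g) for all g. Let P be the G × G real matrix with P_{g,h} = f(h − g). Then the following are equivalent. (A) There exists ψ : G → ℝ with ψ(g) = ψ(−g) for all g, ψ(g) ≥ 0 for all g ≠ 0, ∑_{g∈G} ψ(g) = 0, and P = exp(Q), the matrix exponential of the G × G matrix Q with Q_{g,h} = ψ(h − g). (B) Both of the following hold: (1) for every nontrivial additive character χ : G → ℂ, ∑_{h∈G} Re(χ(h))·f(h) > 0; and (2) for every nonzero g ∈ G, ∏_{χ : Re(χ(g)) > 0} ( ∑_{h∈G} Re(χ(h))·f(h) )^{Re(χ(g))} ≥ ∏_{χ : Re(χ(g)) < 0} ( ∑_{h∈G} Re(χ(h))·f(h) )^{−Re(χ(g))}, where χ ranges over all additive characters of G and the exponents are real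 powers of positive reals. -/
/-!
The convolution matrices `(g, h) ↦ ψ (h - g)` are simultaneously diagonalised by the additive
characters of `G`: the eigenvalue at `χ` is the Fourier coefficient `∑ k, ψ k * χ k`, which for
symmetric real `ψ` is the real number `ψ̂ χ = ∑ k, Re (χ k) * ψ k`. Hence `P = exp Q` exactly when
`f̂ = exp ∘ ψ̂` on every character. An embedding therefore forces `f̂ > 0` and `ψ̂ = log ∘ f̂`, and
real Fourier inversion `ψ g = |G|⁻¹ * ∑ χ, Re (χ g) * log (f̂ χ)` shows that `ψ g ≥ 0` is condition
(2) after exponentiating. Conversely, under (1) (and `f̂ 1 = ∑ f = 1`) the same formula defines a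
symmetric `ψ`, nonnegative off `0` by (2), with `∑ ψ = ψ̂ 1 = log 1 = 0` and `P = exp Q`.
-/

open Matrix ComplexConjugate

theorem Matrix.exp_mulVec_of_mulVec_eq_smul {𝕂 n : Type*} [RCLike 𝕂] [Fintype n] [DecidableEq n]
    {A : Matrix n n 𝕂} {v : n → 𝕂} {c : 𝕂} (h : A *ᵥ v = c • v) :
    NormedSpace.exp A *ᵥ v = NormedSpace.exp c • v := by
  -- Any norm will do; the `ℝ`-algebra structure makes `CompleteSpace` available.
  let : NormedRing (Matrix n n 𝕂) := Matrix.linftyOpNormedRing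
  let : NormedAlgebra ℝ (Matrix n n 𝕂) := Matrix.linftyOpNormedAlgebra
  let : NormedAlgebra 𝕂 (Matrix n n 𝕂) := Matrix.linftyOpNormedAlgebra
  have hpow (k : ℕ) : A ^ k *ᵥ v = c ^ k • v := by
    induction k with
    | zero => simp
    | succ k ih => rw [pow_succ', ← mulVec_mulVec, ih, mulVec_smul, h, smul_smul, ← pow_succ]
  have hA := (NormedSpace.exp_series_hasSum_exp' (𝕂 := 𝕂) A).map (mulVec.addMonoidHomLeft v)
    (continuous_id.matrix_mulVec continuous_const)
  have hc := (NormedSpace.exp_series_hasSum_exp' (𝕂 := 𝕂) c).smul_const v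
  refine hA.unique ?_
  convert hc using 2 with k
  simp [mulVec.addMonoidHomLeft, smul_mulVec, hpow, smul_smul]

theorem Matrix.exp_map_ofReal {n : Type*} [Fintype n] [DecidableEq n] (Q : Matrix n n ℝ) :
    (NormedSpace.exp Q).map Complex.ofReal = NormedSpace.exp (Q.map Complex.ofReal) := by
  let : NormedRing (Matrix n n ℝ) := Matrix.linftyOpNormedRing
  let : NormedAlgebra ℝ (Matrix n n ℝ) := Matrix.linftyOpNormedAlgebra
  let : NormedAlgebra ℚ (Matrix n n ℝ) := Matrix.linftyOpNormedAlgebra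
  let : NormedRing (Matrix n n ℂ) := Matrix.linftyOpNormedRing
  let : NormedAlgebra ℝ (Matrix n n ℂ) := Matrix.linftyOpNormedAlgebra
  exact NormedSpace.map_exp Complex.ofRealHom.mapMatrix
    (continuous_id.matrix_map Complex.continuous_ofReal) Q

theorem Complex.re_mul_re (z w : ℂ) : z.re * w.re = ((z * w).re + (z * conj w).re) / 2 := by
  simp only [mul_re, conj_re, conj_im]
  ring

theorem Real.finprod_rpow_le_finprod_rpow_iff {ι : Type*} [Fintype ι] {a L : ι → ℝ}
    (hL : ∀ i, 0 < L i) :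
    (∏ᶠ (i) (_ : a i < 0), L i ^ (-a i)) ≤ (∏ᶠ (i) (_ : 0 < a i), L i ^ a i) ↔
      0 ≤ ∑ i, a i * Real.log (L i) := by
  classical
  have hpos : ∏ᶠ (i) (_ : 0 < a i), L i ^ a i = ∏ i, L i ^ (a i)⁺ := by
    rw [finprod_eq_prod_of_fintype]
    refine Finset.prod_congr rfl fun i _ => ?_
    rw [finprod_eq_if]
    split_ifs with h
    · rw [posPart_of_nonneg h.le]
    · rw [posPart_eq_zero.2 (not_lt.1 h), Real.rpow_zero]
  have hneg : ∏ᶠ (i) (_ : a i < 0), L i ^ (-a i) = ∏ i, L i ^ (a i)⁻ := by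
    rw [finprod_eq_prod_of_fintype]
    refine Finset.prod_congr rfl fun i _ => ?_
    rw [finprod_eq_if]
    split_ifs with h
    · rw [negPart_of_nonpos h.le]
    · rw [negPart_eq_zero.2 (not_lt.1 h), Real.rpow_zero]
  have hprod_pos (b : ι → ℝ) : 0 < ∏ i, L i ^ b i :=
    Finset.prod_pos fun i _ => Real.rpow_pos_of_pos (hL i) _
  rw [hpos, hneg, ← Real.log_le_log_iff (hprod_pos _) (hprod_pos _),
    Real.log_prod fun i _ => (Real.rpow_pos_of_pos (hL i) _).ne',
    Real.log_prod fun i _ => (Real.rpow_pos_of_pos (hL i) _).ne', ← sub_nonneg,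
    ← Finset.sum_sub_distrib]
  simp_rw [Real.log_rpow (hL _), ← sub_mul, posPart_sub_negPart]

section FiniteAbelianGroup

variable {G : Type*} [AddCommGroup G] [Fintype G]

theorem Matrix.of_sub_mulVec_addChar {R : Type*} [CommRing R] (ψ : G → R) (χ : AddChar G R) :
    (of fun g h : G => ψ (h - g)) *ᵥ ⇑χ = (∑ k, ψ k * χ k) • ⇑χ := by
  funext g
  simp only [mulVec, dotProduct, of_apply, Pi.smul_apply, smul_eq_mul, Finset.sum_mul]
  exact Fintype.sum_equiv (Equiv.subRight g) _ _ fun h => by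
    simp [mul_assoc, ← AddChar.map_add_eq_mul]

theorem Matrix.ext_iff_mulVec_addChar [DecidableEq G] {M N : Matrix G G ℂ} :
    M = N ↔ ∀ χ : AddChar G ℂ, M *ᵥ ⇑χ = N *ᵥ ⇑χ := by
  refine ⟨fun h χ => h ▸ rfl, fun h => Matrix.toLin'.injective ?_⟩
  exact (AddChar.complexBasis G).ext fun χ => by simpa using h χ

namespace AddChar

theorem re_map_neg (χ : AddChar G ℂ) (g : G) : (χ (-g)).re = (χ g).re := by
  rw [map_neg_eq_conj, Complex.conj_re]

/-- The real part of the Fourier coefficient `∑ k, ψ k * χ k` of a real function `ψ`. -/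
def reFourier (ψ : G → ℝ) (χ : AddChar G ℂ) : ℝ := ∑ k, (χ k).re * ψ k

noncomputable def invReFourier (ℓ : AddChar G ℂ → ℝ) (g : G) : ℝ :=
  (Fintype.card G : ℝ)⁻¹ * ∑ χ, (χ g).re * ℓ χ

theorem reFourier_one (ψ : G → ℝ) : reFourier ψ 1 = ∑ k, ψ k := by
  simp [reFourier]

theorem reFourier_inv (ψ : G → ℝ) (χ : AddChar G ℂ) : reFourier ψ χ⁻¹ = reFourier ψ χ := by
  simp only [reFourier, inv_apply, re_map_neg]

theorem invReFourier_neg (ℓ : AddChar G ℂ → ℝ) (g : G) :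
    invReFourier ℓ (-g) = invReFourier ℓ g := by
  simp only [invReFourier, re_map_neg]

theorem invReFourier_nonneg_iff (ℓ : AddChar G ℂ → ℝ) (g : G) :
    0 ≤ invReFourier ℓ g ↔ 0 ≤ ∑ χ, (χ g).re * ℓ χ :=
  mul_nonneg_iff_of_pos_left (by positivity)

theorem sum_ofReal_mul_eq_reFourier {ψ : G → ℝ} (hψ : ∀ g, ψ g = ψ (-g)) (χ : AddChar G ℂ) :
    ∑ k, (ψ k : ℂ) * χ k = reFourier ψ χ := by
  have him : ∑ k, ψ k * (χ k).im = 0 := by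
    have := Fintype.sum_equiv (Equiv.neg G) (fun k => ψ k * (χ k).im)
      (fun k => -(ψ k * (χ k).im)) fun k => by
        rw [Equiv.neg_apply, ← hψ, map_neg_eq_conj, Complex.conj_im, mul_neg, neg_neg]
    rw [Finset.sum_neg_distrib] at this
    linarith
  apply Complex.ext
  · simp [reFourier, Complex.re_sum, mul_comm]
  · simp [reFourier, Complex.im_sum, him]

theorem ofReal_map_of_sub_mulVec {ψ : G → ℝ} (hψ : ∀ g, ψ g = ψ (-g)) (χ : AddChar G ℂ) :
    (of fun g h : G => ψ (h - g)).map Complex.ofReal *ᵥ ⇑χ = (reFourier ψ χ : ℂ) • ⇑χ := by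
  rw [← sum_ofReal_mul_eq_reFourier hψ]
  exact of_sub_mulVec_addChar (fun k => (ψ k : ℂ)) χ

theorem sum_re_apply_mul_re (χ χ' : AddChar G ℂ) : ∑ k, (χ k).re * (χ' k).re =
    ((if χ' = χ⁻¹ then (Fintype.card G : ℝ) else 0) +
      if χ' = χ then (Fintype.card G : ℝ) else 0) / 2 := by
  have h1 : χ * χ' = 0 ↔ χ' = χ⁻¹ := by rw [eq_inv_iff_mul_eq_one, mul_comm]; rfl
  have h2 : χ * χ'⁻¹ = 0 ↔ χ' = χ := mul_inv_eq_one.trans eq_comm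
  simp_rw [Complex.re_mul_re, ← map_neg_eq_conj, ← inv_apply, ← mul_apply, ← Finset.sum_div,
    Finset.sum_add_distrib, ← Complex.re_sum, sum_eq_ite, h1, h2]
  split_ifs <;> simp

theorem reFourier_invReFourier {ℓ : AddChar G ℂ → ℝ} (hℓ : ∀ χ, ℓ χ⁻¹ = ℓ χ) :
    reFourier (invReFourier ℓ) = ℓ := by
  funext χ
  have hG : (Fintype.card G : ℝ) ≠ 0 := by positivity
  calc reFourier (invReFourier ℓ) χ
      = (Fintype.card G : ℝ)⁻¹ * ∑ χ', (∑ k, (χ k).re * (χ' k).re) * ℓ χ' := by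
        simp only [reFourier, invReFourier, Finset.mul_sum, Finset.sum_mul]
        rw [Finset.sum_comm]
        exact Finset.sum_congr rfl fun _ _ => Finset.sum_congr rfl fun _ _ => by ring
    _ = ℓ χ := by
        simp only [sum_re_apply_mul_re, add_div, add_mul, Finset.sum_add_distrib, ite_div,
          ite_mul, zero_div, zero_mul, Finset.sum_ite_eq', Finset.mem_univ, if_true, hℓ]
        field_simp
        ring

variable [DecidableEq G]

theorem sum_re_mul_re_apply (g k : G) : ∑ χ : AddChar G ℂ, (χ g).re * (χ k).re =
    ((if k = -g then (Fintype.card G : ℝ) else 0) +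
      if k = g then (Fintype.card G : ℝ) else 0) / 2 := by
  have h1 : g + k = 0 ↔ k = -g := by rw [add_comm, eq_neg_iff_add_eq_zero]
  have h2 : g + -k = 0 ↔ k = g := by rw [← sub_eq_add_neg, sub_eq_zero, eq_comm]
  simp_rw [Complex.re_mul_re, ← map_neg_eq_conj, ← map_add_eq_mul, ← Finset.sum_div,
    Finset.sum_add_distrib, ← Complex.re_sum, sum_apply_eq_ite, h1, h2]
  split_ifs <;> simp

theorem invReFourier_reFourier {ψ : G → ℝ} (hψ : ∀ g, ψ g = ψ (-g)) :
    invReFourier (reFourier ψ) = ψ := by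
  funext g
  have hG : (Fintype.card G : ℝ) ≠ 0 := by positivity
  calc invReFourier (reFourier ψ) g
      = (Fintype.card G : ℝ)⁻¹ * ∑ k, (∑ χ : AddChar G ℂ, (χ g).re * (χ k).re) * ψ k := by
        simp only [reFourier, invReFourier, Finset.mul_sum, Finset.sum_mul]
        rw [Finset.sum_comm]
        exact Finset.sum_congr rfl fun _ _ => Finset.sum_congr rfl fun _ _ => by ring
    _ = ψ g := by
        simp only [sum_re_mul_re_apply, add_div, add_mul, Finset.sum_add_distrib, ite_div,
          ite_mul, zero_div, zero_mul, Finset.sum_ite_eq', Finset.mem_univ, if_true, ← hψ]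
        field_simp
        ring

theorem of_sub_eq_exp_of_sub_iff {f ψ : G → ℝ} (hf : ∀ g, f g = f (-g))
    (hψ : ∀ g, ψ g = ψ (-g)) :
    (of fun g h : G => f (h - g)) = NormedSpace.exp (of fun g h : G => ψ (h - g)) ↔
      ∀ χ : AddChar G ℂ, reFourier f χ = Real.exp (reFourier ψ χ) := by
  rw [← (Matrix.map_injective Complex.ofReal_injective).eq_iff, Matrix.exp_map_ofReal,
    Matrix.ext_iff_mulVec_addChar]
  refine forall_congr' fun χ => ?_
  rw [ofReal_map_of_sub_mulVec hf, exp_mulVec_of_mulVec_eq_smul (ofReal_map_of_sub_mulVec hψ χ),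
    (smul_left_injective ℂ χ.coe_ne_zero).eq_iff, ← Complex.exp_eq_exp_ℂ, ← Complex.ofReal_exp,
    Complex.ofReal_inj]

end AddChar

end FiniteAbelianGroup

theorem symmetric_group_based_embeddable_iff_general
    {G : Type*} [AddCommGroup G] [Fintype G] [DecidableEq G]
    (f : G → ℝ) (hf_sum : ∑ g, f g = 1)
    (hf_symm : ∀ g, f g = f (-g)) :
    (∃ ψ : G → ℝ, (∀ g, ψ g = ψ (-g)) ∧ (∀ g, g ≠ 0 → 0 ≤ ψ g) ∧ (∑ g, ψ g = 0) ∧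
      (Matrix.of fun g h : G => f (h - g)) =
        NormedSpace.exp (Matrix.of fun g h : G => ψ (h - g)))
    ↔
    ((∀ χ : AddChar G ℂ, χ ≠ 1 → 0 < ∑ h, (χ h).re * f h) ∧
     (∀ g : G, g ≠ 0 →
       ∏ᶠ (χ : AddChar G ℂ) (_ : (χ g).re < 0),
           (∑ h, (χ h).re * f h) ^ (-(χ g).re) ≤
       ∏ᶠ (χ : AddChar G ℂ) (_ : 0 < (χ g).re),
           (∑ h, (χ h).re * f h) ^ ((χ g).re))) := by
  open AddChar in
  have hcond (hpos : ∀ χ, 0 < reFourier f χ) (g : G) :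
      (∏ᶠ (χ : AddChar G ℂ) (_ : (χ g).re < 0), reFourier f χ ^ (-(χ g).re) ≤
        ∏ᶠ (χ : AddChar G ℂ) (_ : 0 < (χ g).re), reFourier f χ ^ ((χ g).re)) ↔
      0 ≤ invReFourier (fun χ => Real.log (reFourier f χ)) g := by
    rw [Real.finprod_rpow_le_finprod_rpow_iff hpos, invReFourier_nonneg_iff]
  constructor
  · rintro ⟨ψ, hψ_symm, hψ_nonneg, -, hexp⟩
    have hfψ := (of_sub_eq_exp_of_sub_iff hf_symm hψ_symm).1 hexp
    have hpos (χ : AddChar G ℂ) : 0 < reFourier f χ := hfψ χ ▸ Real.exp_pos _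
    have hlog : (fun χ => Real.log (reFourier f χ)) = reFourier ψ := by
      simp_rw [hfψ, Real.log_exp]
    refine ⟨fun χ _ => hpos χ, fun g hg => (hcond hpos g).2 ?_⟩
    rw [hlog, invReFourier_reFourier hψ_symm]
    exact hψ_nonneg g hg
  · rintro ⟨hpos_ne_one, hprod⟩
    have hpos (χ : AddChar G ℂ) : 0 < reFourier f χ := by
      rcases eq_or_ne χ 1 with rfl | hχ
      · rw [reFourier_one, hf_sum]
        exact one_pos
      · exact hpos_ne_one χ hχ
    set ψ := invReFourier fun χ => Real.log (reFourier f χ)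
    have hψ (χ : AddChar G ℂ) : reFourier ψ χ = Real.log (reFourier f χ) :=
      congrFun (reFourier_invReFourier fun χ => by rw [reFourier_inv]) χ
    have hψ_symm (g : G) : ψ g = ψ (-g) := (invReFourier_neg _ g).symm
    refine ⟨ψ, hψ_symm, fun g hg => (hcond hpos g).1 (hprod g hg), ?_,
      (of_sub_eq_exp_of_sub_iff hf_symm hψ_symm).2 fun χ => ?_⟩
    · rw [← reFourier_one, hψ, reFourier_one, hf_sum, Real.log_one]
    · rw [hψ, Real.exp_log (hpos χ)]

/-- Theorem 4.1 of the paper: characterization of the `G`-embeddable mutation matrices of a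
symmetric group-based model in terms of the additive characters of `G`. -/
theorem symmetric_group_based_embeddable_iff
    {G : Type*} [AddCommGroup G] [Fintype G] [DecidableEq G]
    (f : G → ℝ) (hf_nonneg : ∀ g, 0 ≤ f g) (hf_sum : ∑ g, f g = 1)
    (hf_symm : ∀ g, f g = f (-g)) :
    (∃ ψ : G → ℝ, (∀ g, ψ g = ψ (-g)) ∧ (∀ g, g ≠ 0 → 0 ≤ ψ g) ∧ (∑ g, ψ g = 0) ∧
      (Matrix.of fun g h : G => f (h - g)) =
        NormedSpace.exp (Matrix.of fun g h : G => ψ (h - g)))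
    ↔
    ((∀ χ : AddChar G ℂ, χ ≠ 1 → 0 < ∑ h, (χ h).re * f h) ∧
     (∀ g : G, g ≠ 0 →
       ∏ᶠ (χ : AddChar G ℂ) (_ : (χ g).re < 0),
           (∑ h, (χ h).re * f h) ^ (-(χ g).re) ≤
       ∏ᶠ (χ : AddChar G ℂ) (_ : 0 < (χ g).re),
           (∑ h, (χ h).re * f h) ^ ((χ g).re))) :=
  symmetric_group_based_embeddable_iff_general f hf_sum hf_symm
end

section
/- Let G = ℤ/2 × ℤ/2 and let f : G → ℝ satisfy f(g) ≥ 0 for all g and ∑_{g∈G} f(g) = 1. Write x = f(0,0) − f(0,1) + f(1,0) − f(1,1), y = f(0,0) + f(0,1) − f(1,0) − f(1,1), and z = f(0,0) − f(0,1) − f(1,0) + f(1,1). Let P be the G × G real matrix with P_{g,h} = f(h − g). Then there exists ψ : G → ℝ with ψ(g) ≥ 0 for all g ≠ 0 and ∑_{g∈G} ψ(g) = 0 such that P = exp(Q), the matrix exponential of the matrix Q with Q_{g,h} = ψ(h − g), if and only if x > 0, y > 0, z > 0, x ≥ y·z, y ≥ x·z, and z ≥ x·y. -/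
/-!
The characters of `ℤ/2 × ℤ/2` are real, and the character table simultaneously diagonalises
every group matrix `(ψ (h - g))_{g,h}`, with eigenvalue the Fourier coefficient `ψ̂ χ` on the
character `χ`. Conjugating by the table, `P = exp Q` becomes `f̂ = exp ψ̂` on every character. On the
trivial character both sides are `1` (`∑ f = 1`, `∑ ψ = 0`); on the others `f̂` is `(x, y, z)`,
so `x, y, z` are the exponentials of `(a, b, c) := ψ̂`. Fourier inversion with `ψ̂ 1 = 0` gives
`4 ψ (1, 0) = a - b - c` and its analogues, so the rate conditions `0 ≤ ψ g` for `g ≠ 0` read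
`b + c ≤ a`, `a + c ≤ b`, `a + b ≤ c`, that is `y z ≤ x`, `x z ≤ y`, `x y ≤ z`.
-/

open Matrix NormedSpace

section GroupMatrix

variable {G R : Type*} [AddCommGroup G]

def groupMatrix (ψ : G → R) : Matrix G G R := of fun g h => ψ (h - g)

def charMatrix {ι : Type*} [Monoid R] (χ : ι → AddChar G R) : Matrix ι G R :=
  of fun i g => χ i g

variable [Fintype G]

def charCoeff [CommSemiring R] (ψ : G → R) (χ : AddChar G R) : R := ∑ g, ψ g * χ (-g)

theorem charCoeff_one [CommSemiring R] (ψ : G → R) : charCoeff ψ 1 = ∑ g, ψ g := by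
  simp [charCoeff]

theorem charMatrix_mul_groupMatrix {ι : Type*} [Fintype ι] [DecidableEq ι] [CommSemiring R]
    (χ : ι → AddChar G R) (ψ : G → R) :
    charMatrix χ * groupMatrix ψ = diagonal (fun i => charCoeff ψ (χ i)) * charMatrix χ := by
  ext i h
  rw [mul_apply, diagonal_mul]
  simp only [charMatrix, groupMatrix, of_apply, charCoeff, Finset.sum_mul]
  refine Fintype.sum_equiv (Equiv.subLeft h) _ _ fun k => ?_
  rw [Equiv.subLeft_apply, mul_assoc, ← AddChar.map_add_eq_mul, neg_sub, sub_add_cancel, mul_comm]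

variable [DecidableEq G] [NormedCommRing R] [NormedAlgebra ℚ R] [CompleteSpace R]

theorem charMatrix_mul_exp_groupMatrix (χ : G → AddChar G R) (hχ : IsUnit (charMatrix χ))
    (ψ : G → R) :
    charMatrix χ * exp (groupMatrix ψ) =
      diagonal (fun i => exp (charCoeff ψ (χ i))) * charMatrix χ := by
  have hdet := (isUnit_iff_isUnit_det _).1 hχ
  have hconj : groupMatrix ψ =
      (charMatrix χ)⁻¹ * diagonal (fun i => charCoeff ψ (χ i)) * charMatrix χ := by
    rw [mul_assoc, ← charMatrix_mul_groupMatrix, nonsing_inv_mul_cancel_left _ _ hdet]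
  rw [hconj, exp_conj' _ _ hχ, exp_diagonal, Pi.exp_def, mul_assoc]
  exact mul_nonsing_inv_cancel_left _ _ hdet

theorem groupMatrix_eq_exp_iff (χ : G → AddChar G R) (hχ : IsUnit (charMatrix χ))
    (f ψ : G → R) :
    groupMatrix f = exp (groupMatrix ψ) ↔
      ∀ g, charCoeff f (χ g) = exp (charCoeff ψ (χ g)) := by
  rw [← hχ.mul_right_inj, charMatrix_mul_groupMatrix, charMatrix_mul_exp_groupMatrix χ hχ,
    hχ.mul_left_inj, diagonal_eq_diagonal_iff]

end GroupMatrix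

theorem ZMod.forall_two {P : ZMod 2 → Prop} : (∀ a, P a) ↔ P 0 ∧ P 1 := Fin.forall_fin_two

theorem ZMod.sum_univ_two {M : Type*} [AddCommMonoid M] (F : ZMod 2 → M) :
    ∑ a, F a = F 0 + F 1 :=
  Fin.sum_univ_two F

section Klein

local notation "V₄" => ZMod 2 × ZMod 2

theorem sum_klein {M : Type*} [AddCommMonoid M] (F : V₄ → M) :
    ∑ g, F g = F (0, 0) + F (0, 1) + (F (1, 0) + F (1, 1)) := by
  simp only [Fintype.sum_prod_type, ZMod.sum_univ_two]

def signChar : AddChar (ZMod 2) ℝ := AddChar.zmodChar 2 (by norm_num : (-1 : ℝ) ^ 2 = 1)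

theorem signChar_one : signChar 1 = -1 :=
  (AddChar.zmodChar_apply' _ 1).trans (pow_one _)

def kleinChar (g : V₄) : AddChar V₄ ℝ :=
  signChar.compAddMonoidHom
    ((AddMonoidHom.mulLeft g.1).comp (AddMonoidHom.fst _ _) +
      (AddMonoidHom.mulLeft g.2).comp (AddMonoidHom.snd _ _))

theorem kleinChar_apply (g h : V₄) : kleinChar g h = signChar (g.1 * h.1 + g.2 * h.2) := rfl

theorem kleinChar_zero : kleinChar 0 = 1 := by
  ext h
  simp [kleinChar_apply]

theorem charMatrix_kleinChar_mul_self :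
    charMatrix kleinChar * charMatrix kleinChar = (4 : ℝ) • 1 := by
  ext g h
  revert g h
  simp only [Prod.forall, ZMod.forall_two]
  simp [mul_apply, sum_klein, charMatrix, kleinChar_apply, signChar_one,
    CharTwo.add_self_eq_zero]
  norm_num

theorem isUnit_charMatrix_kleinChar : IsUnit (charMatrix kleinChar) := by
  refine (isUnit_iff_isUnit_det _).2
    (isUnit_det_of_right_inverse (B := (4 : ℝ)⁻¹ • charMatrix kleinChar) ?_)
  rw [Matrix.mul_smul, charMatrix_kleinChar_mul_self, smul_smul, inv_mul_cancel₀ four_ne_zero,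
    one_smul]

theorem charCoeff_kleinChar_zero_one (ψ : V₄ → ℝ) :
    charCoeff ψ (kleinChar (0, 1)) = ψ (0, 0) - ψ (0, 1) + ψ (1, 0) - ψ (1, 1) := by
  simp only [charCoeff, kleinChar_apply, Prod.fst_neg, ZMod.neg_eq_self_mod_two, zero_mul,
    Prod.snd_neg, one_mul, zero_add, sum_klein, AddChar.map_zero_eq_one, mul_one, signChar_one,
    mul_neg]
  ring

theorem charCoeff_kleinChar_one_zero (ψ : V₄ → ℝ) :
    charCoeff ψ (kleinChar (1, 0)) = ψ (0, 0) + ψ (0, 1) - ψ (1, 0) - ψ (1, 1) := by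
  simp only [charCoeff, kleinChar_apply, Prod.fst_neg, ZMod.neg_eq_self_mod_two, one_mul,
    Prod.snd_neg, zero_mul, add_zero, sum_klein, AddChar.map_zero_eq_one, mul_one, signChar_one,
    mul_neg]
  ring

theorem charCoeff_kleinChar_one_one (ψ : V₄ → ℝ) :
    charCoeff ψ (kleinChar (1, 1)) = ψ (0, 0) - ψ (0, 1) - ψ (1, 0) + ψ (1, 1) := by
  simp only [charCoeff, kleinChar_apply, Prod.fst_neg, ZMod.neg_eq_self_mod_two, one_mul,
    Prod.snd_neg, sum_klein, CharTwo.add_self_eq_zero, AddChar.map_zero_eq_one, mul_one, zero_add,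
    signChar_one, mul_neg, add_zero]
  ring

theorem forall_ne_zero_klein {P : V₄ → Prop} :
    (∀ g, g ≠ 0 → P g) ↔ P (0, 1) ∧ P (1, 0) ∧ P (1, 1) := by
  simp only [ne_eq, Prod.forall, Prod.mk_eq_zero, not_and, ZMod.forall_two, not_true_eq_false,
    imp_false, one_ne_zero, not_false_eq_true, implies_true, forall_const, IsEmpty.forall_iff,
    true_and]

theorem exists_rate_charCoeff_kleinChar_iff (a b c : ℝ) :
    (∃ ψ : V₄ → ℝ, ((∀ g, g ≠ 0 → 0 ≤ ψ g) ∧ ∑ g, ψ g = 0) ∧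
        charCoeff ψ (kleinChar (0, 1)) = a ∧ charCoeff ψ (kleinChar (1, 0)) = b ∧
        charCoeff ψ (kleinChar (1, 1)) = c) ↔
      b + c ≤ a ∧ a + c ≤ b ∧ a + b ≤ c := by
  simp only [charCoeff_kleinChar_zero_one, charCoeff_kleinChar_one_zero,
    charCoeff_kleinChar_one_one, forall_ne_zero_klein, sum_klein]
  constructor
  · rintro ⟨ψ, ⟨⟨h01, h10, h11⟩, hsum⟩, rfl, rfl, rfl⟩
    exact ⟨by linarith, by linarith, by linarith⟩
  · rintro ⟨ha, hb, hc⟩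
    -- Fourier inversion of `(0, a, b, c)`
    refine ⟨fun g => (a * kleinChar (0, 1) g + b * kleinChar (1, 0) g +
      c * kleinChar (1, 1) g) / 4, ?_, ?_⟩
    · simp only [kleinChar_apply, mul_zero, CharTwo.add_self_eq_zero, AddChar.map_zero_eq_one,
        mul_one, zero_add, signChar_one, mul_neg, add_zero]
      exact ⟨⟨by linarith, by linarith, by linarith⟩, by ring⟩
    · simp only [kleinChar_apply, mul_zero, CharTwo.add_self_eq_zero, AddChar.map_zero_eq_one,
        mul_one, zero_add, signChar_one, mul_neg, add_zero]
      exact ⟨by ring, by ring, by ring⟩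

end Klein

theorem exists_exp_eq_iff_pos_and_mul_le (x y z : ℝ) :
    (∃ a b c : ℝ, (b + c ≤ a ∧ a + c ≤ b ∧ a + b ≤ c) ∧
        x = Real.exp a ∧ y = Real.exp b ∧ z = Real.exp c) ↔
      0 < x ∧ 0 < y ∧ 0 < z ∧ y * z ≤ x ∧ x * z ≤ y ∧ x * y ≤ z := by
  constructor
  · rintro ⟨a, b, c, habc, rfl, rfl, rfl⟩
    simpa only [← Real.exp_add, Real.exp_le_exp, Real.exp_pos, true_and] using habc
  · rintro ⟨hx, hy, hz, hxyz⟩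
    obtain ⟨a, rfl⟩ : ∃ a, x = Real.exp a := ⟨_, (Real.exp_log hx).symm⟩
    obtain ⟨b, rfl⟩ : ∃ b, y = Real.exp b := ⟨_, (Real.exp_log hy).symm⟩
    obtain ⟨c, rfl⟩ : ∃ c, z = Real.exp c := ⟨_, (Real.exp_log hz).symm⟩
    simp only [← Real.exp_add, Real.exp_le_exp] at hxyz
    exact ⟨a, b, c, hxyz, rfl, rfl, rfl⟩

theorem kimura3_embeddable_iff_general
    (f : ZMod 2 × ZMod 2 → ℝ) (hf_sum : ∑ g, f g = 1)
    (x y z : ℝ)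
    (hx : x = f (0, 0) - f (0, 1) + f (1, 0) - f (1, 1))
    (hy : y = f (0, 0) + f (0, 1) - f (1, 0) - f (1, 1))
    (hz : z = f (0, 0) - f (0, 1) - f (1, 0) + f (1, 1)) :
    (∃ ψ : ZMod 2 × ZMod 2 → ℝ, (∀ g, g ≠ 0 → 0 ≤ ψ g) ∧ (∑ g, ψ g = 0) ∧
      (Matrix.of fun g h : ZMod 2 × ZMod 2 => f (h - g)) =
        NormedSpace.exp (Matrix.of fun g h : ZMod 2 × ZMod 2 => ψ (h - g)))
    ↔
    (0 < x ∧ 0 < y ∧ 0 < z ∧ y * z ≤ x ∧ x * z ≤ y ∧ x * y ≤ z) := by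
  rw [← charCoeff_kleinChar_zero_one] at hx
  rw [← charCoeff_kleinChar_one_zero] at hy
  rw [← charCoeff_kleinChar_one_one] at hz
  have hembed : ∀ ψ : ZMod 2 × ZMod 2 → ℝ, ∑ g, ψ g = 0 →
      (groupMatrix f = exp (groupMatrix ψ) ↔
        x = Real.exp (charCoeff ψ (kleinChar (0, 1))) ∧
        y = Real.exp (charCoeff ψ (kleinChar (1, 0))) ∧
        z = Real.exp (charCoeff ψ (kleinChar (1, 1)))) := by
    intro ψ hψ
    rw [groupMatrix_eq_exp_iff kleinChar isUnit_charMatrix_kleinChar, Prod.forall]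
    simp only [ZMod.forall_two, Prod.mk_zero_zero, kleinChar_zero, charCoeff_one, hf_sum, hψ,
      ← Real.exp_eq_exp_ℝ, Real.exp_zero, true_and, ← hx, ← hy, ← hz]
  rw [← exists_exp_eq_iff_pos_and_mul_le]
  simp_rw [← exists_rate_charCoeff_kleinChar_iff]
  constructor
  · rintro ⟨ψ, hnn, hsum, heq⟩
    exact ⟨_, _, _, ⟨ψ, ⟨hnn, hsum⟩, rfl, rfl, rfl⟩, (hembed ψ hsum).1 heq⟩
  · rintro ⟨-, -, -, ⟨ψ, ⟨hnn, hsum⟩, rfl, rfl, rfl⟩, hexp⟩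
    exact ⟨ψ, hnn, hsum, (hembed ψ hsum).2 hexp⟩

/-- The characterization of the embeddable mutation matrices of the Kimura 3-parameter model
(the symmetric group-based model with `G = ℤ/2 × ℤ/2`). -/
theorem kimura3_embeddable_iff
    (f : ZMod 2 × ZMod 2 → ℝ) (hf_nonneg : ∀ g, 0 ≤ f g) (hf_sum : ∑ g, f g = 1)
    (x y z : ℝ)
    (hx : x = f (0, 0) - f (0, 1) + f (1, 0) - f (1, 1))
    (hy : y = f (0, 0) + f (0, 1) - f (1, 0) - f (1, 1))
    (hz : z = f (0, 0) - f (0, 1) - f (1, 0) + f (1, 1)) :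
    (∃ ψ : ZMod 2 × ZMod 2 → ℝ, (∀ g, g ≠ 0 → 0 ≤ ψ g) ∧ (∑ g, ψ g = 0) ∧
      (Matrix.of fun g h : ZMod 2 × ZMod 2 => f (h - g)) =
        NormedSpace.exp (Matrix.of fun g h : ZMod 2 × ZMod 2 => ψ (h - g)))
    ↔
    (0 < x ∧ 0 < y ∧ 0 < z ∧ y * z ≤ x ∧ x * z ≤ y ∧ x * y ≤ z) :=
  kimura3_embeddable_iff_general f hf_sum x y z hx hy hz
end

section
/- Let G be a finite abelian group (written additively). Let V = { f : G → ℝ : ∑_{g∈G} f(g) = 1 and f(g) = f(−g) for all g }, equipped with the subspace topology from ℝ^G, and let E ⊆ V be the set of all f ∈ V satisfying: (1) for every nontrivial additive character χ : G → ℂ, ∑_{h∈G} Re(χ(h))·f(h) > 0; and (2) for every nonzero g ∈ G, ∏_{χ : Re(χ(g)) > 0} ( ∑_{h} Re(χ(h))·f(h) )^{Re(χ(g))} ≥ ∏_{χ : Re(χ(g)) < 0} ( ∑_{h} Re(χ(h))·f(h) )^{−Re(χ(g))}. Then for every f ∈ E, f lies in the frontier of E relative to V if and only if there exists a nonzero g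 ∈ G for which the inequality in (2) holds with equality. -/
/-!
The set `E` is cut out of `V` by strict inequalities and by inequalities `L_g ≤ R_g` between
continuous functions, so a point at which no `L_g ≤ R_g` is tight is interior. Conversely, if
`L_g(f) = R_g(f)`, choose a character `χ₁` with `Re χ₁(g) < 0` and move `f` along `Re χ₁`, a
symmetric vector of sum zero. By orthogonality of characters this only raises the eigenvalues
at `χ₁` and `χ₁⁻¹`, which both occur in `L_g`: hence `R_g` is unchanged, `L_g` strictly grows, and
`f + t Re χ₁ ∉ E` for every `t > 0`.
-/

open Finset

namespace AddChar

variable {G : Type*} [AddCommGroup G] [Fintype G]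

lemma re_inv_apply (χ : AddChar G ℂ) (x : G) : (χ⁻¹ x).re = (χ x).re := by
  rw [inv_apply, map_neg_eq_conj, Complex.conj_re]

lemma sum_re_mul_re_eq_zero {χ ψ : AddChar G ℂ} (h₁ : χ ≠ ψ) (h₂ : χ ≠ ψ⁻¹) :
    ∑ x, (χ x).re * (ψ x).re = 0 := by
  have hpt : ∀ x, (χ x).re * (ψ x).re = (((χ * ψ) x).re + ((χ * ψ⁻¹) x).re) / 2 := by
    intro x
    rw [mul_apply, mul_apply, inv_apply, map_neg_eq_conj, Complex.mul_re, Complex.mul_re,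
      Complex.conj_re, Complex.conj_im]
    ring
  have hsum : ∀ φ : AddChar G ℂ, φ ≠ 1 → ∑ x, (φ x).re = 0 := fun φ hφ => by
    rw [← Complex.re_sum, sum_eq_zero_of_ne_one hφ, Complex.zero_re]
  simp_rw [hpt, ← sum_div, sum_add_distrib,
    hsum _ (mul_eq_one_iff_eq_inv.not.2 h₂), hsum _ (mul_inv_eq_one.not.2 h₁)]
  norm_num

lemma sum_re_mul_self_pos (χ : AddChar G ℂ) : 0 < ∑ x, (χ x).re * (χ x).re := by
  refine sum_pos' (fun x _ => mul_self_nonneg _) ⟨0, mem_univ _, ?_⟩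
  simp

lemma sum_re_mul_re_nonneg (χ ψ : AddChar G ℂ) : 0 ≤ ∑ x, (χ x).re * (ψ x).re := by
  by_cases h₁ : χ = ψ
  · exact h₁ ▸ (sum_re_mul_self_pos χ).le
  by_cases h₂ : χ = ψ⁻¹
  · simp_rw [h₂, re_inv_apply]
    exact (sum_re_mul_self_pos ψ).le
  exact (sum_re_mul_re_eq_zero h₁ h₂).ge

lemma exists_re_apply_neg {g : G} (hg : g ≠ 0) : ∃ χ : AddChar G ℂ, (χ g).re < 0 := by
  by_contra! h
  have hsum : ∑ χ : AddChar G ℂ, (χ g).re = 0 := by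
    rw [← Complex.re_sum, sum_apply_eq_zero_iff_ne_zero.2 hg, Complex.zero_re]
  have := single_le_sum (fun χ _ => h χ) (mem_univ (1 : AddChar G ℂ))
  norm_num [hsum] at this

end AddChar

lemma isOpen_setOf_forall_imp_lt {X ι : Type*} [TopologicalSpace X] [Finite ι] {p : ι → Prop}
    {a b : ι → X → ℝ} (ha : ∀ i, Continuous (a i)) (hb : ∀ i, Continuous (b i)) :
    IsOpen {x | ∀ i, p i → a i x < b i x} := by
  simp only [Set.ofPred_forall]
  exact isOpen_iInter_of_finite fun i => isOpen_iInter_of_finite fun _ => isOpen_lt (ha i) (hb i)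

lemma notMem_interior_of_forall_pos {X : Type*} [TopologicalSpace X] {s : Set X} {c : ℝ → X}
    (hc : ContinuousAt c 0) (hout : ∀ t > 0, c t ∉ s) : c 0 ∉ interior s := by
  rw [interior_eq_compl_closure_compl, Set.notMem_compl_iff]
  exact mem_closure_of_tendsto (hc.tendsto.mono_left nhdsWithin_le_nhds)
    (eventually_nhdsWithin_of_forall (s := Set.Ioi 0) hout)

noncomputable section

namespace GroupBasedModel

variable {G : Type*} [AddCommGroup G] [Fintype G]

def symmetricSumOne (G : Type*) [AddCommGroup G] [Fintype G] : Set (G → ℝ) :=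
  {f | (∑ g, f g = 1) ∧ ∀ g, f g = f (-g)}

/-- The eigenvalue of the `G`-invariant matrix `P g h = f (h - g)` on the eigenvector `χ`
(for symmetric `f`). -/
def eigenvalue (χ : AddChar G ℂ) : (G → ℝ) →ₗ[ℝ] ℝ where
  toFun f := ∑ h, (χ h).re * f h
  map_add' f f' := by simp only [Pi.add_apply, mul_add, sum_add_distrib]
  map_smul' c f := by
    simp only [Pi.smul_apply, smul_eq_mul, RingHom.id_apply, mul_sum]
    exact sum_congr rfl fun _ _ => by ring

lemma eigenvalue_apply (χ : AddChar G ℂ) (f : G → ℝ) :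
    eigenvalue χ f = ∑ h, (χ h).re * f h := rfl

def prodPosRe (f : G → ℝ) (g : G) : ℝ :=
  ∏ χ ∈ univ.filter fun χ : AddChar G ℂ => 0 < (χ g).re, eigenvalue χ f ^ (χ g).re

def prodNegRe (f : G → ℝ) (g : G) : ℝ :=
  ∏ χ ∈ univ.filter fun χ : AddChar G ℂ => (χ g).re < 0, eigenvalue χ f ^ (-(χ g).re)

lemma finprod_pos_eq_prodPosRe (f : G → ℝ) (g : G) :
    ∏ᶠ (χ : AddChar G ℂ) (_ : 0 < (χ g).re), (∑ h, (χ h).re * f h) ^ (χ g).re =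
      prodPosRe f g :=
  finprod_cond_eq_prod_of_cond_iff _ fun {_} => by simp

lemma finprod_neg_eq_prodNegRe (f : G → ℝ) (g : G) :
    ∏ᶠ (χ : AddChar G ℂ) (_ : (χ g).re < 0), (∑ h, (χ h).re * f h) ^ (-(χ g).re) =
      prodNegRe f g :=
  finprod_cond_eq_prod_of_cond_iff _ fun {_} => by simp

lemma continuous_prodPosRe (g : G) : Continuous fun f : G → ℝ => prodPosRe f g :=
  continuous_finsetProd _ fun χ hχ => (Real.continuous_rpow_const (mem_filter.1 hχ).2.le).comp
    (eigenvalue χ).continuous_of_finiteDimensional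

lemma continuous_prodNegRe (g : G) : Continuous fun f : G → ℝ => prodNegRe f g :=
  continuous_finsetProd _ fun χ hχ =>
    (Real.continuous_rpow_const (neg_nonneg.2 (mem_filter.1 hχ).2.le)).comp
      (eigenvalue χ).continuous_of_finiteDimensional

def IsEmbeddable (f : G → ℝ) : Prop :=
  (∀ χ : AddChar G ℂ, χ ≠ 1 → 0 < eigenvalue χ f) ∧
    ∀ g : G, g ≠ 0 → prodNegRe f g ≤ prodPosRe f g

lemma isOpen_setOf_strict :
    IsOpen {f : G → ℝ | (∀ χ : AddChar G ℂ, χ ≠ 1 → 0 < eigenvalue χ f) ∧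
      ∀ g : G, g ≠ 0 → prodNegRe f g < prodPosRe f g} :=
  (isOpen_setOf_forall_imp_lt (fun _ => continuous_const)
    fun χ => (eigenvalue χ).continuous_of_finiteDimensional).inter
  (isOpen_setOf_forall_imp_lt continuous_prodNegRe continuous_prodPosRe)

lemma mem_interior_setOf_isEmbeddable {W : Set (G → ℝ)} {f : W}
    (hpos : ∀ χ : AddChar G ℂ, χ ≠ 1 → 0 < eigenvalue χ f)
    (hlt : ∀ g : G, g ≠ 0 → prodNegRe (f : G → ℝ) g < prodPosRe (f : G → ℝ) g) :
    f ∈ interior {p : W | IsEmbeddable (p : G → ℝ)} := by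
  have hU := isOpen_setOf_strict.preimage (continuous_subtype_val (p := (· ∈ W)))
  refine interior_maximal ?_ hU ⟨hpos, hlt⟩
  exact fun _ hp => ⟨hp.1, fun g hg => (hp.2 g hg).le⟩

lemma eigenvalue_one (f : G → ℝ) : eigenvalue 1 f = ∑ h, f h := by
  simp [eigenvalue_apply]

lemma eigenvalue_re_eq_zero {χ ψ : AddChar G ℂ} {g : G} (hχ : 0 < (χ g).re)
    (hψ : (ψ g).re < 0) :
    eigenvalue χ (fun x => (ψ x).re) = 0 := by
  refine AddChar.sum_re_mul_re_eq_zero ?_ ?_ <;> rintro rfl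
  · linarith
  · rw [AddChar.re_inv_apply] at hχ; linarith

lemma add_smul_re_mem_symmetricSumOne {f : G → ℝ} (hf : f ∈ symmetricSumOne G)
    {χ : AddChar G ℂ} (hχ : χ ≠ 1) (t : ℝ) :
    f + t • (fun x => (χ x).re) ∈ symmetricSumOne G := by
  refine ⟨?_, fun g => ?_⟩
  · simp only [Pi.add_apply, Pi.smul_apply, smul_eq_mul, sum_add_distrib, ← mul_sum,
      ← Complex.re_sum, AddChar.sum_eq_zero_of_ne_one hχ, Complex.zero_re, mul_zero, add_zero]
    exact hf.1
  · simp only [Pi.add_apply, Pi.smul_apply, smul_eq_mul, AddChar.map_neg_eq_conj, Complex.conj_re,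
      ← hf.2 g]

lemma prodPosRe_add_smul_re {χ₁ : AddChar G ℂ} {g : G} (hχ₁ : (χ₁ g).re < 0) (f : G → ℝ)
    (t : ℝ) :
    prodPosRe (f + t • fun x => (χ₁ x).re) g = prodPosRe f g :=
  prod_congr rfl fun χ hχ => by
    rw [map_add, map_smul, eigenvalue_re_eq_zero (mem_filter.1 hχ).2 hχ₁, smul_zero, add_zero]

lemma prodNegRe_lt_add_smul_re {χ₁ : AddChar G ℂ} {g : G} (hχ₁ : (χ₁ g).re < 0) {f : G → ℝ}
    (hf : ∀ χ : AddChar G ℂ, 0 < eigenvalue χ f) {t : ℝ} (ht : 0 < t) :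
    prodNegRe f g < prodNegRe (f + t • fun x => (χ₁ x).re) g := by
  have hincr : ∀ χ : AddChar G ℂ,
      eigenvalue χ f ≤ eigenvalue χ (f + t • fun x => (χ₁ x).re) := fun χ => by
    rw [map_add, map_smul, smul_eq_mul, le_add_iff_nonneg_right]
    exact mul_nonneg ht.le (AddChar.sum_re_mul_re_nonneg χ χ₁)
  refine prod_lt_prod (fun χ _ => Real.rpow_pos_of_pos (hf χ) _)
    (fun χ hχ => Real.rpow_le_rpow (hf χ).le (hincr χ) (by linarith [(mem_filter.1 hχ).2]))
    ⟨χ₁, mem_filter.2 ⟨mem_univ _, hχ₁⟩, Real.rpow_lt_rpow (hf χ₁).le ?_ (by linarith)⟩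
  rw [map_add, map_smul, smul_eq_mul, lt_add_iff_pos_right]
  exact mul_pos ht (AddChar.sum_re_mul_self_pos χ₁)

theorem mem_frontier_setOf_isEmbeddable_iff {f : symmetricSumOne G}
    (hf : IsEmbeddable (f : G → ℝ)) :
    f ∈ frontier {p : symmetricSumOne G | IsEmbeddable (p : G → ℝ)} ↔
      ∃ g : G, g ≠ 0 ∧ prodPosRe (f : G → ℝ) g = prodNegRe (f : G → ℝ) g := by
  have hpos : ∀ χ : AddChar G ℂ, 0 < eigenvalue χ f := fun χ => by
    rcases eq_or_ne χ 1 with rfl | hχ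
    · rw [eigenvalue_one, f.2.1]
      exact one_pos
    · exact hf.1 χ hχ
  rw [mem_frontier_iff_notMem_interior
    (s := {p : symmetricSumOne G | IsEmbeddable (p : G → ℝ)}) hf]
  constructor
  · intro hint
    by_contra! hne
    exact hint <| mem_interior_setOf_isEmbeddable hf.1 fun g hg =>
      (hf.2 g hg).lt_of_ne (hne g hg).symm
  · rintro ⟨g, hg, heq⟩
    obtain ⟨χ₁, hχ₁⟩ := AddChar.exists_re_apply_neg hg
    have hχ₁_ne : χ₁ ≠ 1 := by
      rintro rfl
      norm_num at hχ₁
    let c : ℝ → symmetricSumOne G := fun t =>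
      ⟨f + t • fun x => (χ₁ x).re, add_smul_re_mem_symmetricSumOne f.2 hχ₁_ne t⟩
    have hc : Continuous c := by fun_prop
    have hc0 : c 0 = f := by ext; simp [c]
    rw [← hc0]
    refine notMem_interior_of_forall_pos hc.continuousAt fun t ht hct => ?_
    have hle := hct.2 g hg
    rw [prodPosRe_add_smul_re hχ₁, heq] at hle
    exact (prodNegRe_lt_add_smul_re hχ₁ hpos ht).not_ge hle

end GroupBasedModel

end

/-- Corollary 4.2 of the paper: a `G`-embeddable mutation matrix lies on the boundary of the
set of `G`-embeddable mutation matrices (relative to the affine space `V` of symmetric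
vectors of sum one) iff one of the defining inequalities holds with equality. -/
theorem embeddable_boundary_iff
    {G : Type*} [AddCommGroup G] [Fintype G]
    (V : Set (G → ℝ)) (hV : V = {f | (∑ g, f g = 1) ∧ ∀ g, f g = f (-g)})
    (E : Set V)
    (hE : E = {f : V |
      (∀ χ : AddChar G ℂ, χ ≠ 1 → 0 < ∑ h, (χ h).re * (f : G → ℝ) h) ∧
      ∀ g : G, g ≠ 0 →
        ∏ᶠ (χ : AddChar G ℂ) (_ : (χ g).re < 0),
            (∑ h, (χ h).re * (f : G → ℝ) h) ^ (-(χ g).re) ≤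
        ∏ᶠ (χ : AddChar G ℂ) (_ : 0 < (χ g).re),
            (∑ h, (χ h).re * (f : G → ℝ) h) ^ ((χ g).re)}) :
    ∀ f ∈ E, (f ∈ frontier E ↔
      ∃ g : G, g ≠ 0 ∧
        ∏ᶠ (χ : AddChar G ℂ) (_ : 0 < (χ g).re),
            (∑ h, (χ h).re * (f : G → ℝ) h) ^ ((χ g).re) =
        ∏ᶠ (χ : AddChar G ℂ) (_ : (χ g).re < 0),
            (∑ h, (χ h).re * (f : G → ℝ) h) ^ (-(χ g).re)) := by
  subst hV hE
  intro f hf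
  simp only [GroupBasedModel.finprod_pos_eq_prodPosRe, GroupBasedModel.finprod_neg_eq_prodNegRe]
    at hf ⊢
  exact GroupBasedModel.mem_frontier_setOf_isEmbeddable_iff hf
end

section
/- Fix natural numbers n, m, l and polynomials F, G₁, …, G_m, H₁, …, H_l in the polynomial ring ℂ[x₁, …, x_n]. Let R = ℂ[μ₁, …, μ_m, λ₁, …, λ_l, x₁, …, x_n] and let ι : ℂ[x₁, …, x_n] → R be the inclusion. Let L ⊆ R be the ideal generated by the polynomials ∂F/∂x_k − ∑_{i=1}^m μ_i·∂G_i/∂x_k − ∑_{j=1}^l λ_j·∂H_j/∂x_k for k = 1, …, n, together with H_j for j = 1, …, l and μ_i·G_i for i = 1, …, m. For each subset S ⊆ {1, …, m}, let L_S ⊆ R be the ideal generated by ∂F/∂x_k − ∑_{i∈S} μ_i·∂G_i/∂x_k − ∑_{j=1}^l λ_j·∂H_j/∂x_k for k = 1, …, n, together with G_i for i ∈ S and H_j for j = 1, …, l. Then the radical of the ideal ⋂_{S ⊆ {1,…,m}} ι⁻¹(L_S) equals the radical of ι⁻¹(L), where ι⁻¹(·) denotes the contraction (preimage) of an ideal of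 R to ℂ[x₁, …, x_n]. -/
/-!
Setting the multipliers `μ_i` with `i ∉ S` to zero fixes `ℂ[x]` and maps `L` into `L_S`, so
`ι⁻¹(L) ⊆ ι⁻¹(L_S)` for every `S`. Conversely, at a zero of `L` complementary slackness forces
`μ_i = 0` whenever `G_i ≠ 0`, so the point is a zero of `L_S` for its active set
`S = {i | G_i = 0}`. Hence `⋂_S L_S` vanishes on `V(L)` and lies in `√L` by the
Nullstellensatz; contracting along `ι` gives the other inclusion of radicals.
-/

open MvPolynomial

namespace MvPolynomial

variable {R : Type*} [CommRing R] {σ ι κ : Type*}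

section Ideals

variable (F : MvPolynomial σ R) (G : ι → MvPolynomial σ R) (H : κ → MvPolynomial σ R)

/-- The `k`-th partial derivative of the Lagrangian `F - ∑_{i ∈ S} μ_i G_i - ∑_j λ_j H_j`,
in the ring with variables `μ_i` (`Sum.inl i`), `λ_j` (`Sum.inr (Sum.inl j)`) and
`x_k` (`Sum.inr (Sum.inr k)`). -/
noncomputable def lagrangeGradient [Fintype κ] (S : Finset ι) (k : σ) :
    MvPolynomial (ι ⊕ κ ⊕ σ) R :=
  rename (Sum.inr ∘ Sum.inr) (pderiv k F)
    - ∑ i ∈ S, X (Sum.inl i) * rename (Sum.inr ∘ Sum.inr) (pderiv k (G i))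
    - ∑ j, X (Sum.inr (Sum.inl j)) * rename (Sum.inr ∘ Sum.inr) (pderiv k (H j))

noncomputable def kktIdeal [Fintype ι] [Fintype κ] : Ideal (MvPolynomial (ι ⊕ κ ⊕ σ) R) :=
  Ideal.span (Set.range (lagrangeGradient F G H Finset.univ)
    ∪ Set.range (fun j => rename (Sum.inr ∘ Sum.inr) (H j))
    ∪ Set.range (fun i => X (Sum.inl i) * rename (Sum.inr ∘ Sum.inr) (G i)))

noncomputable def lagrangeIdeal [Fintype κ] (S : Finset ι) :
    Ideal (MvPolynomial (ι ⊕ κ ⊕ σ) R) :=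
  Ideal.span (Set.range (lagrangeGradient F G H S)
    ∪ (fun i => rename (Sum.inr ∘ Sum.inr) (G i)) '' (S : Set ι)
    ∪ Set.range (fun j => rename (Sum.inr ∘ Sum.inr) (H j)))

end Ideals

section Substitution

variable [DecidableEq ι]

noncomputable def restrictMultipliers (S : Finset ι) :
    MvPolynomial (ι ⊕ κ ⊕ σ) R →ₐ[R] MvPolynomial (ι ⊕ κ ⊕ σ) R :=
  aeval (Sum.elim (fun i => if i ∈ S then X (Sum.inl i) else 0) (fun w => X (Sum.inr w)))

variable (S : Finset ι)

@[simp]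
theorem restrictMultipliers_X_inl (i : ι) :
    restrictMultipliers (R := R) (κ := κ) (σ := σ) S (X (Sum.inl i)) =
      if i ∈ S then X (Sum.inl i) else 0 :=
  aeval_X _ _

@[simp]
theorem restrictMultipliers_X_inr (w : κ ⊕ σ) :
    restrictMultipliers (R := R) (ι := ι) S (X (Sum.inr w)) = X (Sum.inr w) :=
  aeval_X _ _

@[simp]
theorem restrictMultipliers_rename (p : MvPolynomial σ R) :
    restrictMultipliers (κ := κ) S (rename (Sum.inr ∘ Sum.inr) p) =
      rename (Sum.inr ∘ Sum.inr) p := by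
  rw [← AlgHom.comp_apply]
  congr 1
  exact algHom_ext fun k => by simp

end Substitution

section Decomposition

variable (F : MvPolynomial σ R) (G : ι → MvPolynomial σ R) (H : κ → MvPolynomial σ R)
  [Fintype ι] [Fintype κ]

theorem restrictMultipliers_lagrangeGradient [DecidableEq ι] (S : Finset ι) (k : σ) :
    restrictMultipliers S (lagrangeGradient F G H Finset.univ k) =
      lagrangeGradient F G H S k := by
  simp only [lagrangeGradient, map_sub, map_sum, map_mul, restrictMultipliers_rename,
    restrictMultipliers_X_inl, restrictMultipliers_X_inr, ite_mul, zero_mul,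
    Finset.sum_ite_mem, Finset.univ_inter]

theorem map_kktIdeal_le_lagrangeIdeal [DecidableEq ι] (S : Finset ι) :
    (kktIdeal F G H).map (restrictMultipliers S) ≤ lagrangeIdeal F G H S := by
  rw [kktIdeal, Ideal.map_span, Ideal.span_le]
  rintro _ ⟨g, (⟨k, rfl⟩ | ⟨j, rfl⟩) | ⟨i, rfl⟩, rfl⟩
  · rw [restrictMultipliers_lagrangeGradient]
    exact Ideal.subset_span (Or.inl (Or.inl ⟨k, rfl⟩))
  · rw [restrictMultipliers_rename]
    exact Ideal.subset_span (Or.inr ⟨j, rfl⟩)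
  · rw [map_mul, restrictMultipliers_rename, restrictMultipliers_X_inl]
    split_ifs with hi
    · exact Ideal.mul_mem_left _ _ (Ideal.subset_span (Or.inl (Or.inr ⟨i, hi, rfl⟩)))
    · rw [zero_mul]
      exact zero_mem _

theorem comap_kktIdeal_le_comap_lagrangeIdeal (S : Finset ι) :
    (kktIdeal F G H).comap (rename (Sum.inr ∘ Sum.inr)) ≤
      (lagrangeIdeal F G H S).comap (rename (Sum.inr ∘ Sum.inr)) := by
  classical
  intro f hf
  simpa only [Ideal.mem_comap, restrictMultipliers_rename] using
    map_kktIdeal_le_lagrangeIdeal F G H S (Ideal.mem_map_of_mem (restrictMultipliers S) hf)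

theorem exists_lagrangeIdeal_le_ker_aeval {A : Type*} [CommRing A] [NoZeroDivisors A]
    [Algebra R A] (p : ι ⊕ κ ⊕ σ → A) (hp : kktIdeal F G H ≤ RingHom.ker (aeval p)) :
    ∃ S, lagrangeIdeal F G H S ≤ RingHom.ker (aeval p) := by
  classical
  have hp' : ∀ g ∈ kktIdeal F G H, aeval p g = 0 := fun g hg => hp hg
  set S := Finset.univ.filter fun i => aeval p (rename (Sum.inr ∘ Sum.inr) (G i)) = 0
  have inactive : ∀ i ∉ S, p (Sum.inl i) = 0 := by
    intro i hi
    have hslack := hp' _ (Ideal.subset_span (Or.inr ⟨i, rfl⟩))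
    rw [map_mul, aeval_X] at hslack
    exact (mul_eq_zero.mp hslack).resolve_right fun h => hi (by simp [S, h])
  refine ⟨S, Ideal.span_le.mpr ?_⟩
  rintro _ ((⟨k, rfl⟩ | ⟨i, hi, rfl⟩) | ⟨j, rfl⟩)
  · have hgrad := hp' _ (Ideal.subset_span (Or.inl (Or.inl ⟨k, rfl⟩)))
    simp only [SetLike.mem_coe, RingHom.mem_ker, lagrangeGradient, map_sub, map_sum, map_mul,
      aeval_X] at hgrad ⊢
    rwa [← Finset.sum_subset (Finset.subset_univ S)
      fun i _ hi => by rw [inactive i hi, zero_mul]] at hgrad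
  · exact (Finset.mem_filter.mp hi).2
  · exact hp' _ (Ideal.subset_span (Or.inl (Or.inr ⟨j, rfl⟩)))

end Decomposition

theorem iInf_lagrangeIdeal_le_radical_kktIdeal {k K : Type*} [Field k] [Field K]
    [IsAlgClosed K] [Algebra k K] [Finite σ] [Fintype ι] [Fintype κ]
    (F : MvPolynomial σ k) (G : ι → MvPolynomial σ k) (H : κ → MvPolynomial σ k) :
    ⨅ S, lagrangeIdeal F G H S ≤ (kktIdeal F G H).radical := by
  rw [← vanishingIdeal_zeroLocus_eq_radical (K := K)]
  intro f hf p hp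
  obtain ⟨S, hS⟩ := exists_lagrangeIdeal_le_ker_aeval F G H p hp
  exact hS (Ideal.mem_iInf.mp hf S)

end MvPolynomial

/-- Theorem 5.1 of the paper: the radical of the intersection of the contracted Lagrange
ideals `L_S` over all subsets `S` of the inequality constraints equals the radical of the
contracted KKT ideal `L`. -/
theorem kkt_radical_decomposition (n m l : ℕ)
    (F : MvPolynomial (Fin n) ℂ) (Gs : Fin m → MvPolynomial (Fin n) ℂ)
    (Hs : Fin l → MvPolynomial (Fin n) ℂ)
    (ι : MvPolynomial (Fin n) ℂ →ₐ[ℂ] MvPolynomial (Fin m ⊕ Fin l ⊕ Fin n) ℂ)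
    (hι : ι = rename (Sum.inr ∘ Sum.inr))
    (L : Ideal (MvPolynomial (Fin m ⊕ Fin l ⊕ Fin n) ℂ))
    (hL : L = Ideal.span (
      (Set.range fun k : Fin n =>
        ι (pderiv k F)
          - ∑ i : Fin m, X (Sum.inl i) * ι (pderiv k (Gs i))
          - ∑ j : Fin l, X (Sum.inr (Sum.inl j)) * ι (pderiv k (Hs j)))
      ∪ (Set.range fun j : Fin l => ι (Hs j))
      ∪ (Set.range fun i : Fin m => X (Sum.inl i) * ι (Gs i))))
    (LS : Finset (Fin m) → Ideal (MvPolynomial (Fin m ⊕ Fin l ⊕ Fin n) ℂ))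
    (hLS : ∀ S : Finset (Fin m), LS S = Ideal.span (
      (Set.range fun k : Fin n =>
        ι (pderiv k F)
          - ∑ i ∈ S, X (Sum.inl i) * ι (pderiv k (Gs i))
          - ∑ j : Fin l, X (Sum.inr (Sum.inl j)) * ι (pderiv k (Hs j)))
      ∪ ((fun i : Fin m => ι (Gs i)) '' (S : Set (Fin m)))
      ∪ (Set.range fun j : Fin l => ι (Hs j)))) :
    (⨅ S : Finset (Fin m), Ideal.comap ι (LS S)).radical =
      (Ideal.comap ι L).radical := by
  subst hι hL
  obtain rfl : LS = lagrangeIdeal F Gs Hs := funext hLS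
  apply le_antisymm
  · rw [Ideal.radical_le_radical_iff, ← Ideal.comap_iInf, ← Ideal.comap_radical]
    exact Ideal.comap_mono (iInf_lagrangeIdeal_le_radical_kktIdeal (K := ℂ) F Gs Hs)
  · exact Ideal.radical_mono (le_iInf (comap_kktIdeal_le_comap_lagrangeIdeal F Gs Hs))
end

section
/- Fix natural numbers n, m₁, m₂, polynomials F, G⁽¹⁾₁, …, G⁽¹⁾_{m₁}, G⁽²⁾₁, …, G⁽²⁾_{m₂} in ℂ[x₁, …, x_n], and a point x* ∈ ℂⁿ. Suppose that G⁽¹⁾_j(x*)·G⁽²⁾_k(x*) = 0 for all j, k, and that there exist complex numbers λ_{jk} (1 ≤ j ≤ m₁, 1 ≤ k ≤ m₂) such that for every variable index v, (∂F/∂x_v)(x*) = ∑_{j,k} λ_{jk}·(∂(G⁽¹⁾_j·G⁽²⁾_k)/∂x_v)(x*). Then at least one of the following holds: (a) G⁽¹⁾_j(x*) = 0 for all j and there exist λ⁽¹⁾₁, …, λ⁽¹⁾_{m₁} ∈ ℂ with (∂F/∂x_v)(x*) = ∑_j λ⁽¹⁾_j·(∂G⁽¹⁾_j/∂x_v)(x*)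 for every v; or (b) G⁽²⁾_k(x*) = 0 for all k and there exist λ⁽²⁾₁, …, λ⁽²⁾_{m₂} ∈ ℂ with (∂F/∂x_v)(x*) = ∑_k λ⁽²⁾_k·(∂G⁽²⁾_k/∂x_v)(x*) for every v. -/
open MvPolynomial

/-- Lemma 5.1 of the paper: a point satisfying the Lagrange conditions for the product
generators `G⁽¹⁾_j · G⁽²⁾_k` satisfies the Lagrange conditions for the `G⁽¹⁾_j` or for the
`G⁽²⁾_k`. -/
theorem lagrange_decomposition_one (n m₁ m₂ : ℕ)
    (F : MvPolynomial (Fin n) ℂ)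
    (G₁ : Fin m₁ → MvPolynomial (Fin n) ℂ) (G₂ : Fin m₂ → MvPolynomial (Fin n) ℂ)
    (x : Fin n → ℂ)
    (hvanish : ∀ j k, eval x (G₁ j) * eval x (G₂ k) = 0)
    (hlagrange : ∃ l : Fin m₁ → Fin m₂ → ℂ, ∀ v : Fin n,
      eval x (pderiv v F) =
        ∑ j : Fin m₁, ∑ k : Fin m₂, l j k * eval x (pderiv v (G₁ j * G₂ k))) :
    ((∀ j, eval x (G₁ j) = 0) ∧ ∃ l₁ : Fin m₁ → ℂ, ∀ v : Fin n,
      eval x (pderiv v F) = ∑ j : Fin m₁, l₁ j * eval x (pderiv v (G₁ j))) ∨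
    ((∀ k, eval x (G₂ k) = 0) ∧ ∃ l₂ : Fin m₂ → ℂ, ∀ v : Fin n,
      eval x (pderiv v F) = ∑ k : Fin m₂, l₂ k * eval x (pderiv v (G₂ k))) := by
  obtain ⟨l, hl⟩ := hlagrange
  by_cases h1 : ∀ j, eval x (G₁ j) = 0
  · left
    refine ⟨h1, fun j => ∑ k, l j k * eval x (G₂ k), fun v => ?_⟩
    rw [hl v]
    refine Finset.sum_congr rfl fun j _ => ?_
    rw [Finset.sum_mul]
    refine Finset.sum_congr rfl fun k _ => ?_
    rw [pderiv_mul]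
    simp [h1 j]
    ring
  · right
    push_neg at h1
    obtain ⟨j₀, hj₀⟩ := h1
    have h2 : ∀ k, eval x (G₂ k) = 0 := fun k => by
      have := hvanish j₀ k
      exact (mul_eq_zero.mp this).resolve_left hj₀
    refine ⟨h2, fun k => ∑ j, l j k * eval x (G₁ j), fun v => ?_⟩
    rw [hl v, Finset.sum_comm]
    refine Finset.sum_congr rfl fun k _ => ?_
    rw [Finset.sum_mul]
    refine Finset.sum_congr rfl fun j _ => ?_
    rw [pderiv_mul]
    simp [h2 k]
    ring
end

section
/- Fix natural numbers n, m₁, m₂, n₁, n₂, polynomials F, G⁽¹⁾₁, …, G⁽¹⁾_{m₁}, G⁽²⁾₁, …, G⁽²⁾_{m₂}, H⁽¹⁾₁, …, H⁽¹⁾_{n₁}, H⁽²⁾₁, …, H⁽²⁾_{n₂} in ℂ[x₁, …, x_n], and a point x* ∈ ℂⁿ. Suppose that G⁽¹⁾_j(x*)·G⁽²⁾_k(x*) = 0 for all j, k, that H⁽¹⁾_j(x*)·H⁽²⁾_k(x*) = 0 for all j, k, and that there exist complex numbers λ_{jk} and μ_{jk} such that for every variable index v, (∂F/∂x_v)(x*)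 = ∑_{j,k} λ_{jk}·(∂(G⁽¹⁾_j·G⁽²⁾_k)/∂x_v)(x*) + ∑_{j,k} μ_{jk}·(∂(H⁽¹⁾_j·H⁽²⁾_k)/∂x_v)(x*). Then there exist a, b ∈ {1, 2} such that: G⁽ᵃ⁾_j(x*) = 0 for all j, H⁽ᵇ⁾_k(x*) = 0 for all k, and there exist complex numbers λ'_j and μ'_k with (∂F/∂x_v)(x*) = ∑_j λ'_j·(∂G⁽ᵃ⁾_j/∂x_v)(x*) + ∑_k μ'_k·(∂H⁽ᵇ⁾_k/∂x_v)(x*) for every v. -/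
open MvPolynomial

lemma lagrange_side (n : ℕ) (m : Fin 2 → ℕ)
    (G : (a : Fin 2) → Fin (m a) → MvPolynomial (Fin n) ℂ)
    (x : Fin n → ℂ)
    (hv : ∀ (j : Fin (m 0)) (k : Fin (m 1)), eval x (G 0 j) * eval x (G 1 k) = 0)
    (l : Fin (m 0) → Fin (m 1) → ℂ) :
    ∃ a : Fin 2, (∀ j : Fin (m a), eval x (G a j) = 0) ∧
      ∃ l' : Fin (m a) → ℂ, ∀ v : Fin n,
        (∑ j : Fin (m 0), ∑ k : Fin (m 1), l j k * eval x (pderiv v (G 0 j * G 1 k))) =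
          ∑ j : Fin (m a), l' j * eval x (pderiv v (G a j)) := by
  by_cases h : ∀ j : Fin (m 0), eval x (G 0 j) = 0
  · refine ⟨0, h, fun j => ∑ k : Fin (m 1), l j k * eval x (G 1 k), fun v => ?_⟩
    rw [Finset.sum_congr rfl fun j _ => Finset.sum_mul _ _ _]
    refine Finset.sum_congr rfl fun j _ => Finset.sum_congr rfl fun k _ => ?_
    simp only [pderiv_mul, map_add, map_mul, h j, zero_mul, add_zero]
    ring
  · push_neg at h
    obtain ⟨j₀, hj₀⟩ := h
    have h1 : ∀ k : Fin (m 1), eval x (G 1 k) = 0 := fun k => by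
      rcases mul_eq_zero.mp (hv j₀ k) with h | h
      · exact absurd h hj₀
      · exact h
    refine ⟨1, h1, fun k => ∑ j : Fin (m 0), l j k * eval x (G 0 j), fun v => ?_⟩
    rw [Finset.sum_comm, Finset.sum_congr rfl fun k _ => Finset.sum_mul _ _ _]
    refine Finset.sum_congr rfl fun k _ => Finset.sum_congr rfl fun j _ => ?_
    simp only [pderiv_mul, map_add, map_mul, h1 k, mul_zero, zero_add]
    ring

/-- Lemma 5.2 of the paper: a point satisfying the Lagrange conditions for the generators of
`J + K`, where `J = J₁ ∩ J₂` is generated by the products `G⁽¹⁾_j · G⁽²⁾_k` and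
`K = K₁ ∩ K₂` by the products `H⁽¹⁾_j · H⁽²⁾_k`, satisfies the Lagrange conditions for the
generators of `J_a + K_b` for some `a, b ∈ {1, 2}`. -/
theorem lagrange_decomposition_two (n : ℕ) (m p : Fin 2 → ℕ)
    (F : MvPolynomial (Fin n) ℂ)
    (G : (a : Fin 2) → Fin (m a) → MvPolynomial (Fin n) ℂ)
    (H : (b : Fin 2) → Fin (p b) → MvPolynomial (Fin n) ℂ)
    (x : Fin n → ℂ)
    (hGvanish : ∀ (j : Fin (m 0)) (k : Fin (m 1)),
      eval x (G 0 j) * eval x (G 1 k) = 0)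
    (hHvanish : ∀ (j : Fin (p 0)) (k : Fin (p 1)),
      eval x (H 0 j) * eval x (H 1 k) = 0)
    (hlagrange : ∃ (l : Fin (m 0) → Fin (m 1) → ℂ) (μ : Fin (p 0) → Fin (p 1) → ℂ),
      ∀ v : Fin n, eval x (pderiv v F) =
        (∑ j : Fin (m 0), ∑ k : Fin (m 1), l j k * eval x (pderiv v (G 0 j * G 1 k))) +
        (∑ j : Fin (p 0), ∑ k : Fin (p 1), μ j k * eval x (pderiv v (H 0 j * H 1 k)))) :
    ∃ a b : Fin 2,
      (∀ j : Fin (m a), eval x (G a j) = 0) ∧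
      (∀ k : Fin (p b), eval x (H b k) = 0) ∧
      ∃ (l' : Fin (m a) → ℂ) (μ' : Fin (p b) → ℂ), ∀ v : Fin n,
        eval x (pderiv v F) =
          (∑ j : Fin (m a), l' j * eval x (pderiv v (G a j))) +
          (∑ k : Fin (p b), μ' k * eval x (pderiv v (H b k))) := by
  obtain ⟨l, μ, hl⟩ := hlagrange
  obtain ⟨a, hGa, l', hl'⟩ := lagrange_side n m G x hGvanish l
  obtain ⟨b, hHb, μ', hμ'⟩ := lagrange_side n p H x hHvanish μ
  exact ⟨a, b, hGa, hHb, l', μ', fun v => by rw [hl v, hl' v, hμ' v]⟩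
end
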